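/- arXiv:2108.09225 — 6 statements merged into one kernel-verified Lean document; each statement's English description precedes it below -/
import Mathlib

section
/- Let α∈(0,1), n≥1, and a_i>0 for i=1,…,n+1. Define σ: S_n → ℝ by σ(t) = (Σ_{i=1}^{n+1} a_i² (t_i − t_{i−1})^α)^{1/2}, with t₀=0 and t_{n+1}=1. Then σ attains its maximum on S_n at the unique point z₀ = (z₁,…,zₙ) with z_i = (Σ_{j=1}^{i} a_j^{2/(1−α)}) / (Σ_{j=1}^{n+1} a_j^{2/(1−α)}), i=1,…,n, and the maximum value equals σ* = (Σ_{i=1}^{n+1} a_i^{2/(1−α)})^{(1−α)/2}. -/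
open Finset Real Filter Set

lemma stmt9_tangent_lt {α x y : ℝ} (hα : 0 < α) (hα1 : α < 1) (hx : 0 ≤ x) (hy : 0 < y)
    (hxy : x ≠ y) : x ^ α < y ^ α + α * y ^ (α - 1) * (x - y) := by
  have hs : -1 ≤ x / y - 1 := by
    have : 0 ≤ x / y := div_nonneg hx hy.le
    linarith
  have hs' : x / y - 1 ≠ 0 := by
    intro h
    apply hxy
    field_simp at h
    linarith
  have h := rpow_one_add_lt_one_add_mul_self hs hs' hα hα1
  rw [add_sub_cancel] at h
  have h2 : (x / y) ^ α < 1 + α * (x / y - 1) := h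
  have hyα : 0 < y ^ α := rpow_pos_of_pos hy _
  have h3 := mul_lt_mul_of_pos_right h2 hyα
  rw [div_rpow hx hy.le, div_mul_cancel₀ _ hyα.ne'] at h3
  calc x ^ α < (1 + α * (x / y - 1)) * y ^ α := h3
    _ = y ^ α + α * y ^ (α-1) * (x - y) := by
      rw [rpow_sub hy, rpow_one]
      field_simp

lemma stmt9_tangent_le {α x y : ℝ} (hα : 0 < α) (hα1 : α < 1) (hx : 0 ≤ x) (hy : 0 < y) :
    x ^ α ≤ y ^ α + α * y ^ (α - 1) * (x - y) := by
  rcases eq_or_ne x y with rfl | h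
  · simp
  · exact (stmt9_tangent_lt hα hα1 hx hy h).le

lemma stmt9_filter_succ {n : ℕ} (i : Fin (n+1)) :
    (Finset.univ.filter (fun j : Fin (n+1) => (j:ℕ) < ((i.succ : Fin (n+2)):ℕ)))
      = insert i (Finset.univ.filter
          (fun j : Fin (n+1) => (j:ℕ) < ((i.castSucc : Fin (n+2)):ℕ))) := by
  ext j
  simp only [Finset.mem_filter, Finset.mem_univ, true_and, Finset.mem_insert,
    Fin.val_succ, Fin.coe_castSucc, Nat.lt_succ_iff_lt_or_eq]
  constructor
  · rintro (h | h)
    · exact Or.inr h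
    · exact Or.inl (Fin.ext h)
  · rintro (rfl | h)
    · exact Or.inr rfl
    · exact Or.inl h

lemma stmt9_not_mem_filter_cast {n : ℕ} (i : Fin (n+1)) :
    i ∉ (Finset.univ.filter
      (fun j : Fin (n+1) => (j:ℕ) < ((i.castSucc : Fin (n+2)):ℕ))) := by
  simp

lemma stmt9_partial_sum {n : ℕ} (t : Fin (n+2) → ℝ) (k : Fin (n+2)) :
    t k - t 0 = ∑ j ∈ Finset.univ.filter (fun j : Fin (n+1) => (j:ℕ) < (k:ℕ)),
      (t j.succ - t j.castSucc) := by
  induction k using Fin.induction with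
  | zero => simp
  | succ i ih =>
    rw [stmt9_filter_succ, Finset.sum_insert (stmt9_not_mem_filter_cast i), ← ih]
    ring

/-- For `α ∈ (0,1)` and positive weights `a_1,…,a_{n+1}`, the function
`σ(t) = (Σ a_i² (t_i − t_{i−1})^α)^{1/2}` on the simplex `S_n` (with `t₀ = 0`, `t_{n+1} = 1`,
encoded via extended coordinates `t : Fin (n+2) → ℝ`) attains its maximum at the unique point
`z₀` with `z_i = (Σ_{j≤i} a_j^{2/(1−α)})/(Σ_j a_j^{2/(1−α)})`, and the maximum value is
`σ* = (Σ_i a_i^{2/(1−α)})^{(1−α)/2}`. -/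
theorem stmt_9 (n : ℕ) (hn : 1 ≤ n) (α : ℝ) (hα : α ∈ Set.Ioo (0:ℝ) 1)
    (a : Fin (n+1) → ℝ) (ha : ∀ i, 0 < a i) :
    let S : Set (Fin (n+2) → ℝ) :=
      {t | t 0 = 0 ∧ t (Fin.last (n+1)) = 1 ∧ Monotone t}
    let σ : (Fin (n+2) → ℝ) → ℝ :=
      fun t => Real.sqrt (∑ i : Fin (n+1), (a i)^2 * (t i.succ - t i.castSucc) ^ α)
    let σstar : ℝ := (∑ i : Fin (n+1), a i ^ ((2:ℝ)/(1-α))) ^ ((1-α)/2)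
    let z : Fin (n+2) → ℝ := fun k =>
      (∑ j ∈ Finset.univ.filter (fun j : Fin (n+1) => (j:ℕ) < (k:ℕ)),
          a j ^ ((2:ℝ)/(1-α)))
        / (∑ j : Fin (n+1), a j ^ ((2:ℝ)/(1-α)))
    z ∈ S ∧ σ z = σstar ∧ ∀ t ∈ S, t ≠ z → σ t < σstar := by
  obtain ⟨hα0, hα1⟩ := hα
  intro S σ σstar z
  set β : ℝ := (2:ℝ)/(1-α) with hβ
  have h1α : (0:ℝ) < 1 - α := by linarith
  have hb : ∀ j, 0 < a j ^ β := fun j => rpow_pos_of_pos (ha j) _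
  set T : ℝ := ∑ j : Fin (n+1), a j ^ β with hTdef
  have hT : 0 < T := Finset.sum_pos (fun j _ => hb j) Finset.univ_nonempty
  -- differences of z
  have hzdiff : ∀ i : Fin (n+1), z i.succ - z i.castSucc = a i ^ β / T := by
    intro i
    show (∑ j ∈ _, a j ^ β) / T - (∑ j ∈ _, a j ^ β) / T = a i ^ β / T
    rw [stmt9_filter_succ, Finset.sum_insert (stmt9_not_mem_filter_cast i)]
    ring
  -- constant Lagrange multiplier
  have hconst : ∀ i : Fin (n+1), (a i)^2 * (a i ^ β / T) ^ (α - 1) = T ^ (1-α) := by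
    intro i
    rw [div_rpow (hb i).le hT.le, ← rpow_natCast (a i) 2, ← rpow_mul (ha i).le]
    have hβe : β * (α - 1) = -2 := by
      rw [hβ, div_mul_eq_mul_div, div_eq_iff h1α.ne']
      ring
    rw [hβe, mul_div_assoc', ← Real.rpow_add (ha i)]
    norm_num
    rw [← Real.rpow_neg hT.le, neg_sub]
  -- value at the optimum: per-term
  have hterm : ∀ i : Fin (n+1), (a i)^2 * (a i ^ β / T) ^ α = a i ^ β * T ^ (-α) := by
    intro i
    rw [div_rpow (hb i).le hT.le, ← rpow_natCast (a i) 2, ← rpow_mul (ha i).le]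
    have h2βα : ((2:ℕ):ℝ) + β * α = β := by
      push_cast
      rw [hβ, eq_div_iff h1α.ne', add_mul, div_mul_eq_mul_div, div_mul_cancel₀ _ h1α.ne']
      ring
    rw [mul_div_assoc', ← Real.rpow_add (ha i), h2βα, Real.rpow_neg hT.le, div_eq_mul_inv]
  have hsum_opt : ∑ i : Fin (n+1), (a i)^2 * (a i ^ β / T) ^ α = T ^ (1-α) := by
    rw [Finset.sum_congr rfl (fun i _ => hterm i), ← Finset.sum_mul, ← hTdef]
    nth_rewrite 1 [← Real.rpow_one T]
    rw [← Real.rpow_add hT]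
    ring_nf
  have hsum_c : ∑ i : Fin (n+1), a i ^ β / T = 1 := by
    rw [← Finset.sum_div, ← hTdef, div_self hT.ne']
  -- z ∈ S
  have hz0 : z 0 = 0 := by
    show (∑ j ∈ _, _) / T = 0
    have : (Finset.univ.filter (fun j : Fin (n+1) => (j:ℕ) < ((0 : Fin (n+2)):ℕ))) = ∅ := by
      ext j; simp
    rw [this]
    simp
  have hzlast : z (Fin.last (n+1)) = 1 := by
    show (∑ j ∈ _, _) / T = 1
    have : (Finset.univ.filter
        (fun j : Fin (n+1) => (j:ℕ) < ((Fin.last (n+1)):ℕ))) = Finset.univ := by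
      ext j; simp [Fin.is_lt]; exact Nat.le_of_lt_succ j.is_lt
    rw [this, ← hTdef, div_self hT.ne']
  have hzmono : Monotone z := by
    intro k l hkl
    show (∑ j ∈ _, _) / T ≤ (∑ j ∈ _, _) / T
    have hsub : (Finset.univ.filter (fun j : Fin (n+1) => (j:ℕ) < (k:ℕ)))
        ⊆ (Finset.univ.filter (fun j : Fin (n+1) => (j:ℕ) < (l:ℕ))) := by
      intro j hj
      simp only [Finset.mem_filter, Finset.mem_univ, true_and] at hj ⊢
      exact lt_of_lt_of_le hj hkl
    exact (div_le_div_iff_of_pos_right hT).mpr (Finset.sum_le_sum_of_subset_of_nonneg hsub (fun j _ _ => (hb j).le))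
  have hfull : (Finset.univ.filter
      (fun j : Fin (n+1) => (j:ℕ) < ((Fin.last (n+1)):ℕ))) = Finset.univ := by
    ext j; simp [Fin.is_lt]; exact Nat.le_of_lt_succ j.is_lt
  have hsqrt : Real.sqrt (T ^ (1-α)) = σstar := by
    rw [Real.sqrt_eq_rpow, ← Real.rpow_mul hT.le]
    show T ^ ((1-α) * (1/2)) = (∑ i : Fin (n+1), a i ^ β) ^ ((1-α)/2)
    rw [← hTdef]
    ring_nf
  refine ⟨⟨hz0, hzlast, hzmono⟩, ?_, ?_⟩
  · show Real.sqrt (∑ i : Fin (n+1), (a i)^2 * (z i.succ - z i.castSucc) ^ α) = σstar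
    rw [Finset.sum_congr rfl (fun i _ => by rw [hzdiff i]), hsum_opt, hsqrt]
  · intro t ht hne
    obtain ⟨ht0, htlast, htmono⟩ := ht
    set x : Fin (n+1) → ℝ := fun i => t i.succ - t i.castSucc with hxdef
    have hx0 : ∀ i, 0 ≤ x i := fun i => sub_nonneg.mpr (htmono (Fin.castSucc_le_succ i))
    have hxsum : ∑ i, x i = 1 := by
      have h := stmt9_partial_sum t (Fin.last (n+1))
      rw [ht0, htlast, hfull, sub_zero] at h
      exact h.symm
    have hne' : ∃ i, x i ≠ a i ^ β / T := by
      by_contra h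
      push_neg at h
      apply hne
      funext k
      have h1 := stmt9_partial_sum t k
      have h2 := stmt9_partial_sum z k
      rw [ht0, sub_zero] at h1
      rw [hz0, sub_zero] at h2
      rw [h1, h2]
      exact Finset.sum_congr rfl fun j _ => by rw [hzdiff j]; exact h j
    obtain ⟨i0, hi0⟩ := hne'
    have hRHS : ∀ i : Fin (n+1),
        (a i)^2 * ((a i ^ β / T) ^ α + α * (a i ^ β / T) ^ (α-1) * (x i - a i ^ β / T))
          = (a i)^2 * (a i ^ β / T) ^ α + α * T ^ (1-α) * (x i - a i ^ β / T) := by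
      intro i
      rw [mul_add, ← hconst i]
      ring
    have hle : ∀ i ∈ Finset.univ, (a i)^2 * x i ^ α
        ≤ (a i)^2 * (a i ^ β / T) ^ α + α * T ^ (1-α) * (x i - a i ^ β / T) := by
      intro i _
      rw [← hRHS i]
      exact mul_le_mul_of_nonneg_left
        (stmt9_tangent_le hα0 hα1 (hx0 i) (div_pos (hb i) hT)) (sq_nonneg _)
    have hlt : (a i0)^2 * x i0 ^ α
        < (a i0)^2 * (a i0 ^ β / T) ^ α + α * T ^ (1-α) * (x i0 - a i0 ^ β / T) := by
      rw [← hRHS i0]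
      exact mul_lt_mul_of_pos_left
        (stmt9_tangent_lt hα0 hα1 (hx0 i0) (div_pos (hb i0) hT) hi0)
        (pow_pos (ha i0) 2)
    have hkey : ∑ i : Fin (n+1), (a i)^2 * x i ^ α < T ^ (1-α) := by
      have hsum := Finset.sum_lt_sum hle ⟨i0, Finset.mem_univ _, hlt⟩
      have : ∑ i : Fin (n+1),
          ((a i)^2 * (a i ^ β / T) ^ α + α * T ^ (1-α) * (x i - a i ^ β / T))
            = T ^ (1-α) := by
        rw [Finset.sum_add_distrib, hsum_opt, ← Finset.mul_sum, Finset.sum_sub_distrib,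
          hxsum, hsum_c]
        ring
      linarith [hsum, this.le, this.ge]
    show Real.sqrt (∑ i : Fin (n+1), (a i)^2 * (x i) ^ α) < σstar
    rw [← hsqrt]
    exact Real.sqrt_lt_sqrt
      (Finset.sum_nonneg fun i _ => mul_nonneg (sq_nonneg _) (rpow_nonneg (hx0 i) _)) hkey
end

section
/- Let α∈(0,1), a_i>0 for i=1,…,n+1, σ(t) = (Σ_{i=1}^{n+1} a_i²(t_i−t_{i−1})^α)^{1/2} on S_n (t₀=0, t_{n+1}=1), σ* = (Σ_{i=1}^{n+1} a_i^{2/(1−α)})^{(1−α)/2}, and z₀=(z₁,…,zₙ) with z_i = (Σ_{j≤i} a_j^{2/(1−α)})/(Σ_{j≤n+1} a_j^{2/(1−α)}) (set z₀:=0, z_{n+1}:=1). Then lim_{δ→0} sup { | (1 − σ(t)/σ*) / ( (α(1−α)(Σ_{i=1}^{n+1} a_i^{2/(1−α)})/4) Σ_{i=1}^{n+1} a_i^{2/(α−1)} ((t_i−z_i)−(t_{i−1}−z_{i−1}))² ) − 1 | : t∈S_n, t≠z₀, |t−z₀| ≤ δ } = 0. -/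
open Finset Real Filter Set

lemma hd1 (α : ℝ) {x : ℝ} (hx : 0 < 1 + x) :
    HasDerivAt (fun u : ℝ => (1+u) ^ α - 1 - α * u - α * (α-1)/2 * u^2)
      (α * (1+x) ^ (α-1) - α - α * (α-1) * x) x := by
  have h1 : HasDerivAt (fun u : ℝ => (1:ℝ)+u) 1 x := (hasDerivAt_id x).const_add 1
  have h2 := h1.rpow_const (p := α) (Or.inl (by positivity))
  have h3 : HasDerivAt (fun u : ℝ => (1+u) ^ α - 1 - α * u - α*(α-1)/2 * u^2)
      (1 * α * (1+x)^(α-1) - 0 - α * 1 - α*(α-1)/2 * (2*x)) x :=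
    (((h2.sub (hasDerivAt_const x 1)).sub ((hasDerivAt_id x).const_mul α)).sub
      (((hasDerivAt_pow 2 x).const_mul (α*(α-1)/2)).congr_deriv (by ring)))
  convert h3 using 1; ring

lemma hd2 (α : ℝ) :
    HasDerivAt (fun u : ℝ => α * (1+u) ^ (α-1) - α - α * (α-1) * u) 0 0 := by
  have h1 : HasDerivAt (fun u : ℝ => (1:ℝ)+u) 1 0 := (hasDerivAt_id 0).const_add 1
  have h2 := (h1.rpow_const (p := α-1) (Or.inl (by norm_num))).const_mul α
  have h3 : HasDerivAt (fun u : ℝ => α * (1+u) ^ (α-1) - α - α * (α-1) * u)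
      (α * (1 * (α-1) * (1+0)^(α-1-1)) - 0 - α * (α-1) * 1) 0 :=
    (h2.sub (hasDerivAt_const 0 α)).sub ((hasDerivAt_id 0).const_mul (α*(α-1)))
  convert h3 using 1
  rw [show (1:ℝ)+0 = 1 by norm_num, Real.one_rpow]; ring

lemma taylor_rpow (α : ℝ) {ε : ℝ} (hε : 0 < ε) :
    ∃ δ : ℝ, 0 < δ ∧ δ ≤ 1/2 ∧ ∀ u : ℝ, |u| ≤ δ →
      |(1+u) ^ α - 1 - α * u - α * (α-1)/2 * u^2| ≤ ε * u^2 := by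
  set h' : ℝ → ℝ := fun u => α * (1+u) ^ (α-1) - α - α * (α-1) * u with hh'
  have h'0 : h' 0 = 0 := by simp [hh']
  have hlo := (hasDerivAt_iff_isLittleO.1 (hd2 α)).def hε
  rw [Metric.eventually_nhds_iff] at hlo
  obtain ⟨δ₁, hδ₁, hb⟩ := hlo
  refine ⟨min (δ₁/2) (1/2), by positivity, min_le_right _ _, fun u hu => ?_⟩
  have hu2 : |u| ≤ δ₁/2 := le_trans hu (min_le_left _ _)
  have hu3 : |u| ≤ 1/2 := le_trans hu (min_le_right _ _)
  have key : ∀ x ∈ Set.uIcc (0:ℝ) u, |x| ≤ |u| := by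
    intro x hx
    rcases Set.mem_uIcc.1 hx with ⟨h1, h2⟩ | ⟨h1, h2⟩
    · rw [abs_of_nonneg h1]; exact le_trans h2 (le_abs_self u)
    · rw [abs_of_nonpos h2]; exact le_trans (neg_le_neg h1) (neg_le_abs u)
  have bound : ∀ x ∈ Set.uIcc (0:ℝ) u, ‖h' x‖ ≤ ε * |u| := by
    intro x hx
    have hxd : dist x 0 < δ₁ := by
      rw [Real.dist_eq, sub_zero]
      calc |x| ≤ |u| := key x hx
        _ ≤ δ₁/2 := hu2
        _ < δ₁ := by linarith
    have := hb hxd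
    have e0 : α * (1 + (0:ℝ)) ^ (α - 1) - α - α * (α-1) * 0 = 0 := by
      rw [show (1:ℝ)+0 = 1 by norm_num, Real.one_rpow]; ring
    simp only [sub_zero, smul_zero, Real.norm_eq_abs, e0] at this
    rw [hh', Real.norm_eq_abs]
    calc |α * (1+x) ^ (α-1) - α - α * (α-1) * x| ≤ ε * |x| := this
      _ ≤ ε * |u| := mul_le_mul_of_nonneg_left (key x hx) hε.le
  have hderiv : ∀ x ∈ Set.uIcc (0:ℝ) u,
      HasDerivWithinAt (fun u : ℝ => (1+u) ^ α - 1 - α * u - α * (α-1)/2 * u^2)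
        (h' x) (Set.uIcc 0 u) x := by
    intro x hx
    have hpos : 0 < 1 + x := by have := key x hx; linarith [abs_le.1 (le_trans this hu3)]
    exact (hd1 α hpos).hasDerivWithinAt
  have := Convex.norm_image_sub_le_of_norm_hasDerivWithin_le hderiv bound
    (convex_uIcc 0 u) Set.left_mem_uIcc Set.right_mem_uIcc
  simp only [Real.norm_eq_abs, sub_zero] at this
  have h0 : (1+(0:ℝ)) ^ α - 1 - α * 0 - α * (α-1)/2 * 0^2 = 0 := by
    rw [show (1:ℝ)+0 = 1 by norm_num, Real.one_rpow]; ring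
  rw [h0, sub_zero] at this
  calc |(1+u) ^ α - 1 - α * u - α * (α-1)/2 * u^2| ≤ ε * |u| * |u| := this
    _ = ε * u^2 := by rw [mul_assoc, abs_mul_abs_self]; ring_nf

lemma fin_telescope {n : ℕ} (f : Fin (n+2) → ℝ) :
    ∑ i : Fin (n+1), (f i.succ - f i.castSucc) = f (Fin.last (n+1)) - f 0 := by
  set g : ℕ → ℝ := fun m => f ⟨min m (n+1), by omega⟩ with hg
  have h1 : ∑ i : Fin (n+1), (f i.succ - f i.castSucc)
      = ∑ i : Fin (n+1), (fun m => g (m+1) - g m) i.val := by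
    apply Finset.sum_congr rfl
    intro i _
    have hi := i.isLt
    simp only [hg]
    congr 1
    · congr 1; exact Fin.ext (by simp [Fin.succ]; omega)
    · congr 1; exact Fin.ext (by simp [Fin.castSucc])
  rw [h1, Fin.sum_univ_eq_sum_range (fun m => g (m+1) - g m) (n+1), Finset.sum_range_sub]
  simp only [hg]
  congr 2
  · exact Fin.ext (by simp [Fin.last])

lemma fin_ext_of_increments {n : ℕ} (f g : Fin (n+2) → ℝ) (h0 : f 0 = g 0)
    (h : ∀ i : Fin (n+1), f i.succ - f i.castSucc = g i.succ - g i.castSucc) : f = g := by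
  funext k
  obtain ⟨m, hm⟩ := k
  induction m with
  | zero => exact h0
  | succ p ih =>
    have hp : p < n + 2 := by omega
    have hp1 : p < n + 1 := by omega
    have := h ⟨p, hp1⟩
    have e1 : (⟨p, hp1⟩ : Fin (n+1)).succ = ⟨p+1, hm⟩ := rfl
    have e2 : (⟨p, hp1⟩ : Fin (n+1)).castSucc = ⟨p, hp⟩ := rfl
    rw [e1, e2] at this
    have := ih hp
    linarith [h ⟨p, hp1⟩]

lemma filter_succ_eq {n : ℕ} (b : Fin (n+1) → ℝ) (i : Fin (n+1)) :
    ∑ j ∈ Finset.univ.filter (fun j : Fin (n+1) => (j:ℕ) < ((i.succ : Fin (n+2)):ℕ)), b j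
      - ∑ j ∈ Finset.univ.filter (fun j : Fin (n+1) => (j:ℕ) < ((i.castSucc : Fin (n+2)):ℕ)), b j
      = b i := by
  have e1 : ((i.succ : Fin (n+2)):ℕ) = (i:ℕ) + 1 := rfl
  have e2 : ((i.castSucc : Fin (n+2)):ℕ) = (i:ℕ) := rfl
  rw [e1, e2]
  have hins : Finset.univ.filter (fun j : Fin (n+1) => (j:ℕ) < (i:ℕ) + 1)
      = insert i (Finset.univ.filter (fun j : Fin (n+1) => (j:ℕ) < (i:ℕ))) := by
    ext j
    simp only [Finset.mem_filter, Finset.mem_univ, true_and, Finset.mem_insert]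
    constructor
    · intro hj
      rcases Nat.lt_succ_iff_lt_or_eq.1 hj with h | h
      · exact Or.inr (by simpa using h)
      · exact Or.inl (Fin.ext h)
    · rintro (rfl | hj)
      · omega
      · simp at hj; omega
  rw [hins, Finset.sum_insert (by simp)]
  ring


set_option maxHeartbeats 2000000 in
/-- local expansion of the normalized standard deviation of `Z^α` near its
unique maximizer `z₀`:
`lim_{δ→0} sup_{t∈Sₙ, t≠z₀, |t−z₀|≤δ} |(1 − σ(t)/σ*) / (K Σᵢ a_i^{2/(α−1)}((tᵢ−zᵢ)−(t_{i−1}−z_{i−1}))²) − 1| = 0`,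
with `K = α(1−α)(Σᵢ a_i^{2/(1−α)})/4`, expressed in ε-δ form. -/
theorem stmt_10 (n : ℕ) (hn : 1 ≤ n) (α : ℝ) (hα : α ∈ Set.Ioo (0:ℝ) 1)
    (a : Fin (n+1) → ℝ) (ha : ∀ i, 0 < a i) :
    let S : Set (Fin (n+2) → ℝ) :=
      {t | t 0 = 0 ∧ t (Fin.last (n+1)) = 1 ∧ Monotone t}
    let σ : (Fin (n+2) → ℝ) → ℝ :=
      fun t => Real.sqrt (∑ i : Fin (n+1), (a i)^2 * (t i.succ - t i.castSucc) ^ α)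
    let σstar : ℝ := (∑ i : Fin (n+1), a i ^ ((2:ℝ)/(1-α))) ^ ((1-α)/2)
    let z : Fin (n+2) → ℝ := fun k =>
      (∑ j ∈ Finset.univ.filter (fun j : Fin (n+1) => (j:ℕ) < (k:ℕ)),
          a j ^ ((2:ℝ)/(1-α)))
        / (∑ j : Fin (n+1), a j ^ ((2:ℝ)/(1-α)))
    let K : ℝ := α * (1-α) * (∑ i : Fin (n+1), a i ^ ((2:ℝ)/(1-α))) / 4
    ∀ ε > 0, ∃ δ > 0, ∀ t ∈ S, t ≠ z → dist t z ≤ δ →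
      |(1 - σ t / σstar) /
          (K * ∑ i : Fin (n+1), a i ^ ((2:ℝ)/(α-1)) *
            ((t i.succ - z i.succ) - (t i.castSucc - z i.castSucc))^2) - 1| ≤ ε := by
  intro S σ σstar z K ε hε
  obtain ⟨hα0, hα1⟩ := hα
  have h1α : 0 < 1 - α := by linarith
  set b : Fin (n+1) → ℝ := fun i => a i ^ ((2:ℝ)/(1-α)) with hbdef
  have hb : ∀ i, 0 < b i := fun i => Real.rpow_pos_of_pos (ha i) _
  set A : ℝ := ∑ j : Fin (n+1), b j with hAdef
  have hA : 0 < A := Finset.sum_pos (fun i _ => hb i) ⟨0, Finset.mem_univ 0⟩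
  set p : ℝ := α * (1-α) / 2 with hpdef
  have hp : 0 < p := by positivity
  have hp8 : p ≤ 1/8 := by nlinarith [sq_nonneg (α - 1/2)]
  set ε'' : ℝ := min (p*ε/4) (1/4) with hε''def
  have hε''pos : 0 < ε'' := lt_min (by positivity) (by norm_num)
  have hε''1 : ε'' ≤ 1/4 := min_le_right _ _
  have hε''2 : ε'' ≤ p*ε/4 := min_le_left _ _
  obtain ⟨δA, hδA0, hδA2, htay⟩ := taylor_rpow α hε''pos
  have hne : (Finset.univ : Finset (Fin (n+1))).Nonempty := ⟨0, Finset.mem_univ 0⟩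
  set m : ℝ := Finset.univ.inf' hne (fun i => b i / A) with hmdef
  have hm : 0 < m := by
    rw [hmdef, Finset.lt_inf'_iff]
    exact fun i _ => div_pos (hb i) hA
  have hmle : ∀ i : Fin (n+1), m ≤ b i / A := fun i =>
    Finset.inf'_le _ (Finset.mem_univ i)
  set s0 : ℝ := Real.sqrt (min (ε/2) (1/2)) with hs0def
  have hs0 : 0 < s0 := Real.sqrt_pos.2 (lt_min (by positivity) (by norm_num))
  refine ⟨m * min δA s0 / 2, by positivity, ?_⟩
  intro t ht htne htd
  obtain ⟨ht0, ht1, htm⟩ := ht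
  -- increments
  set Δz : Fin (n+1) → ℝ := fun i => z i.succ - z i.castSucc with hΔzdef
  have hΔz : ∀ i, Δz i = b i / A := by
    intro i
    rw [hΔzdef]
    show (∑ j ∈ Finset.univ.filter (fun j : Fin (n+1) => (j:ℕ) < ((i.succ : Fin (n+2)):ℕ)), b j)/A
      - (∑ j ∈ Finset.univ.filter (fun j : Fin (n+1) => (j:ℕ) < ((i.castSucc : Fin (n+2)):ℕ)), b j)/A
      = b i / A
    rw [div_sub_div_same, filter_succ_eq]
  have hΔzpos : ∀ i, 0 < Δz i := fun i => by rw [hΔz i]; exact div_pos (hb i) hA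
  have hΔzm : ∀ i, m ≤ Δz i := fun i => by rw [hΔz]; exact hmle i
  have hSz : ∑ i, Δz i = 1 := by
    rw [Finset.sum_congr rfl (fun i _ => hΔz i), ← Finset.sum_div, ← hAdef,
      div_self hA.ne']
  have hz0 : z 0 = 0 := by
    have : Finset.univ.filter (fun j : Fin (n+1) => (j:ℕ) < ((0 : Fin (n+2)):ℕ)) = ∅ := by
      apply Finset.filter_false_of_mem; intro j _; simp
    show _ / A = 0
    rw [this]; simp
  set Δt : Fin (n+1) → ℝ := fun i => t i.succ - t i.castSucc with hΔtdef
  have hΔt0 : ∀ i, 0 ≤ Δt i := fun i =>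
    sub_nonneg.2 (htm (Fin.castSucc_lt_succ : i.castSucc < i.succ).le)
  set x : Fin (n+1) → ℝ := fun i => Δt i - Δz i with hxdef
  have hSx : ∑ i, x i = 0 := by
    have h1 : ∑ i, Δt i = 1 := by
      rw [hΔtdef]; rw [fin_telescope t, ht1, ht0]; ring
    rw [hxdef]
    simp only [Finset.sum_sub_distrib]
    rw [h1, hSz]; ring
  have hx_le : ∀ i, |x i| ≤ 2 * dist t z := by
    intro i
    have h1 : dist (t i.succ) (z i.succ) ≤ dist t z := dist_le_pi_dist t z _
    have h2 : dist (t i.castSucc) (z i.castSucc) ≤ dist t z := dist_le_pi_dist t z _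
    rw [Real.dist_eq] at h1 h2
    have : x i = (t i.succ - z i.succ) - (t i.castSucc - z i.castSucc) := by
      rw [hxdef]; ring
    rw [this]
    calc |(t i.succ - z i.succ) - (t i.castSucc - z i.castSucc)|
        ≤ |t i.succ - z i.succ| + |t i.castSucc - z i.castSucc| := abs_sub _ _
      _ ≤ 2 * dist t z := by linarith
  set u : Fin (n+1) → ℝ := fun i => x i / Δz i with hudef
  have hu : ∀ i, |u i| ≤ min δA s0 := by
    intro i
    rw [hudef]
    have h1 : |x i / Δz i| = |x i| / Δz i := by
      rw [abs_div, abs_of_pos (hΔzpos i)]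
    rw [h1]
    have h2 : |x i| ≤ m * min δA s0 := by
      calc |x i| ≤ 2 * dist t z := hx_le i
        _ ≤ 2 * (m * min δA s0 / 2) := by linarith
        _ = m * min δA s0 := by ring
    calc |x i| / Δz i ≤ (m * min δA s0) / m := by
          apply div_le_div₀ (by positivity) h2 hm (hΔzm i)
      _ = min δA s0 := by field_simp
  have huδA : ∀ i, |u i| ≤ δA := fun i => le_trans (hu i) (min_le_left _ _)
  have hus0 : ∀ i, |u i| ≤ s0 := fun i => le_trans (hu i) (min_le_right _ _)
  have hxu : ∀ i, x i = Δz i * u i := by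
    intro i; rw [hudef]; field_simp [(hΔzpos i).ne']
  have h1u : ∀ i, 0 ≤ 1 + u i := by
    intro i
    have : 1 + u i = Δt i / Δz i := by
      rw [hudef]
      show 1 + (Δt i - Δz i) / Δz i = Δt i / Δz i
      field_simp [(hΔzpos i).ne']
      ring
    rw [this]
    exact div_nonneg (hΔt0 i) (hΔzpos i).le
  set D : ℝ := ∑ i, Δz i * (u i)^2 with hDdef
  have hD0 : 0 ≤ D := Finset.sum_nonneg fun i _ => mul_nonneg (hΔzpos i).le (sq_nonneg _)
  -- denominator identity
  set c : Fin (n+1) → ℝ := fun i => a i ^ ((2:ℝ)/(α-1)) with hcdef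
  have hc : ∀ i, c i = (b i)⁻¹ := by
    intro i
    rw [hcdef, hbdef]
    show a i ^ ((2:ℝ)/(α-1)) = (a i ^ ((2:ℝ)/(1-α)))⁻¹
    rw [← Real.rpow_neg (ha i).le]
    congr 1
    rw [show α - 1 = -(1-α) by ring, div_neg]
  have hDc : D = A * ∑ i, c i * (x i)^2 := by
    rw [hDdef, Finset.mul_sum]
    apply Finset.sum_congr rfl
    intro i _
    rw [hc, hΔz, hxu i, hΔz]
    have hbi := hb i
    field_simp
  have hKD : K * (∑ i, c i * (x i)^2) = p * D / 2 := by
    rw [hDc]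
    show α * (1-α) * A / 4 * _ = _
    rw [hpdef]; ring
  -- positivity of D
  have hDpos : 0 < D := by
    by_contra hcon
    push_neg at hcon
    have hD00 : D = 0 := le_antisymm hcon hD0
    have hall : ∀ i ∈ Finset.univ, Δz i * (u i)^2 = 0 := by
      intro i _
      exact (Finset.sum_eq_zero_iff_of_nonneg (fun j _ => mul_nonneg (hΔzpos j).le (sq_nonneg _) : ∀ j ∈ Finset.univ, (0:ℝ) ≤ Δz j * (u j)^2)).1 hD00 i (Finset.mem_univ i)
    apply htne
    apply fin_ext_of_increments t z (by rw [ht0, hz0])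
    intro i
    have hi := hall i (Finset.mem_univ i)
    have hui : u i = 0 := by
      have := hΔzpos i
      rcases mul_eq_zero.1 hi with h | h
      · exact absurd h this.ne'
      · exact pow_eq_zero_iff (by norm_num) |>.1 h
    have hxi : x i = 0 := by rw [hxu i, hui]; ring
    have : Δt i = Δz i := by
      have h' : Δt i - Δz i = 0 := hxi
      linarith
    calc t i.succ - t i.castSucc = Δt i := rfl
      _ = Δz i := this
      _ = z i.succ - z i.castSucc := rfl
  -- F and sigma
  set F : ℝ := ∑ i, Δz i * (1 + u i) ^ α with hFdef
  have hF0 : 0 ≤ F := Finset.sum_nonneg fun i _ =>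
    mul_nonneg (hΔzpos i).le (Real.rpow_nonneg (h1u i) α)
  have hab : ∀ i, (a i)^2 = (b i) ^ (1-α) := by
    intro i
    rw [hbdef]
    show (a i)^2 = (a i ^ ((2:ℝ)/(1-α))) ^ (1-α)
    rw [← Real.rpow_natCast (a i) 2, ← Real.rpow_mul (ha i).le]
    congr 1
    push_cast
    field_simp
  have hterm : ∀ i, (a i)^2 * (Δt i) ^ α = Δz i * (1 + u i)^α * A^(1-α) := by
    intro i
    have hΔteq : Δt i = Δz i * (1 + u i) := by
      rw [hudef, hxdef]
      have := (hΔzpos i).ne'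
      field_simp
      ring
    rw [hΔteq, Real.mul_rpow (hΔzpos i).le (h1u i)]
    have key : (a i)^2 * (Δz i)^α = Δz i * A^(1-α) := by
      have e1 : b i ^ (1-α) * b i ^ α = b i := by
        rw [← Real.rpow_add (hb i)]; norm_num
      have hAα : (0:ℝ) < A ^ α := Real.rpow_pos_of_pos hA α
      calc (a i)^2 * (Δz i)^α = (b i^(1-α) * b i^α) / A^α := by
            rw [hab i, hΔz i, Real.div_rpow (hb i).le hA.le]; ring
        _ = b i / A^α := by rw [e1]
        _ = Δz i * A^(1-α) := by
            rw [hΔz i, Real.rpow_sub hA, Real.rpow_one]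
            field_simp
    calc (a i)^2 * ((Δz i)^α * (1+u i)^α) = ((a i)^2 * (Δz i)^α) * (1+u i)^α := by ring
      _ = (Δz i * A^(1-α)) * (1+u i)^α := by rw [key]
      _ = Δz i * (1+u i)^α * A^(1-α) := by ring
  have hσ : σ t = Real.sqrt (F * A^(1-α)) := by
    show Real.sqrt _ = _
    congr 1
    rw [hFdef, Finset.sum_mul]
    exact Finset.sum_congr rfl fun i _ => hterm i
  have hσstar : σstar = Real.sqrt (A^(1-α)) := by
    show A ^ ((1-α)/2) = Real.sqrt (A^(1-α))
    rw [Real.sqrt_eq_rpow, ← Real.rpow_mul hA.le]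
    congr 1
    ring
  have hApow : 0 < A ^ (1-α) := Real.rpow_pos_of_pos hA _
  have hF2 : σ t / σstar = Real.sqrt F := by
    rw [hσ, hσstar, Real.sqrt_mul hF0, mul_div_assoc,
      div_self (Real.sqrt_pos.2 hApow).ne', mul_one]
  -- Taylor estimate
  have hTayF : |F - 1 + p * D| ≤ ε'' * D := by
    have hid : F - 1 + p * D = ∑ i, Δz i * ((1 + u i)^α - 1 - α * u i - α*(α-1)/2 * (u i)^2) := by
      have e : ∀ i ∈ Finset.univ, Δz i * ((1 + u i)^α - 1 - α * u i - α*(α-1)/2 * (u i)^2)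
          = Δz i * (1+u i)^α - Δz i - α * x i - (α*(α-1)/2) * (Δz i * (u i)^2) := by
        intro i _; rw [hxu]; ring
      rw [Finset.sum_congr rfl e]
      simp only [Finset.sum_sub_distrib, ← Finset.mul_sum]
      rw [← hFdef, hSz, hSx, ← hDdef, hpdef]
      ring
    rw [hid]
    calc |∑ i, Δz i * ((1 + u i)^α - 1 - α * u i - α*(α-1)/2 * (u i)^2)|
        ≤ ∑ i, |Δz i * ((1 + u i)^α - 1 - α * u i - α*(α-1)/2 * (u i)^2)| :=
          Finset.abs_sum_le_sum_abs _ _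
      _ ≤ ∑ i, Δz i * (ε'' * (u i)^2) := by
          apply Finset.sum_le_sum
          intro i _
          rw [abs_mul, abs_of_pos (hΔzpos i)]
          exact mul_le_mul_of_nonneg_left (htay (u i) (huδA i)) (hΔzpos i).le
      _ = ε'' * D := by
          rw [hDdef, Finset.mul_sum]
          exact Finset.sum_congr rfl fun i _ => by ring
  -- D small
  have hDle : D ≤ min (ε/2) (1/2) := by
    have h1 : D ≤ ∑ i, Δz i * s0^2 := by
      apply Finset.sum_le_sum
      intro i _
      apply mul_le_mul_of_nonneg_left _ (hΔzpos i).le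
      calc (u i)^2 = |u i|^2 := (sq_abs _).symm
        _ ≤ s0^2 := pow_le_pow_left₀ (abs_nonneg _) (hus0 i) 2
    have h2 : ∑ i, Δz i * s0^2 = s0^2 := by
      rw [← Finset.sum_mul, hSz, one_mul]
    have h3 : s0^2 = min (ε/2) (1/2) := Real.sq_sqrt (le_min (by positivity) (by norm_num))
    linarith
  have hDε : D ≤ ε/2 := le_trans hDle (min_le_left _ _)
  have hDh : D ≤ 1/2 := le_trans hDle (min_le_right _ _)
  -- final estimates
  set s : ℝ := Real.sqrt F with hsdef
  have hs0' : 0 ≤ s := Real.sqrt_nonneg F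
  have hssq : s^2 = F := Real.sq_sqrt hF0
  set e : ℝ := F - 1 + p * D with hedef
  have he : |e| ≤ ε'' * D := hTayF
  have he' := abs_le.1 he
  clear_value b A p ε'' m s0 Δz Δt x u D c F s e
  have habs1F : |1 - F| ≤ (p + ε'') * D := by
    have : 1 - F = p * D - e := by rw [hedef]; ring
    rw [this]
    calc |p * D - e| ≤ |p * D| + |e| := abs_sub _ _
      _ ≤ p * D + ε'' * D := by
          rw [abs_of_nonneg (mul_nonneg hp.le hD0)]; linarith
      _ = (p + ε'') * D := by ring
  have habs1s : |1 - s| ≤ (p + ε'') * D := by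
    have h1 : |1 - s| * (1 + s) = |1 - F| := by
      rw [← abs_of_nonneg (by linarith : (0:ℝ) ≤ 1 + s), ← abs_mul]
      congr 1
      linear_combination -hssq
    have h2 : |1 - s| ≤ |1 - s| * (1 + s) :=
      le_mul_of_one_le_right (abs_nonneg _) (by linarith)
    linarith [habs1F, h1 ▸ h2]
  -- main goal rewrite
  have hxrw : ∀ i : Fin (n+1), (t i.succ - z i.succ) - (t i.castSucc - z i.castSucc) = x i := by
    intro i; rw [hxdef, hΔtdef, hΔzdef]; ring
  have hgoal : (1 - σ t / σstar) /
      (K * ∑ i : Fin (n+1), a i ^ ((2:ℝ)/(α-1)) *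
        ((t i.succ - z i.succ) - (t i.castSucc - z i.castSucc))^2)
      = (1 - s) / (p * D / 2) := by
    rw [hF2]
    congr 1
    rw [← hKD]
    congr 1
    exact Finset.sum_congr rfl fun i _ => by rw [hxrw i, hcdef]
  rw [hgoal]
  set G : ℝ := p * D / 2 with hGdef
  clear_value G
  have hG : 0 < G := by rw [hGdef]; exact div_pos (mul_pos hp hDpos) two_pos
  rw [div_sub_one hG.ne', abs_div, abs_of_pos hG, div_le_iff₀ hG]
  -- |(1 - s) - G| ≤ ε * G
  have hwid : ((1 - s) - G) * (1 + s) = p * D * (1 - s) / 2 - e := by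
    rw [hGdef, hedef]
    linear_combination -hssq
  have hw1 : |(1 - s) - G| ≤ |(1 - s) - G| * (1 + s) :=
    le_mul_of_one_le_right (abs_nonneg _) (by linarith)
  have hw2 : |(1 - s) - G| * (1 + s) = |p * D * (1 - s) / 2 - e| := by
    rw [← abs_of_nonneg (by linarith : (0:ℝ) ≤ 1 + s), ← abs_mul, hwid]
  have hw3 : |p * D * (1 - s) / 2 - e| ≤ p * D / 2 * ((p + ε'') * D) + ε'' * D := by
    calc |p * D * (1 - s) / 2 - e| ≤ |p * D * (1 - s) / 2| + |e| := abs_sub _ _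
      _ = p * D / 2 * |1 - s| + |e| := by
          rw [show p * D * (1 - s) / 2 = (p * D / 2) * (1 - s) by ring, abs_mul,
            abs_of_nonneg (by positivity : (0:ℝ) ≤ p * D / 2)]
      _ ≤ p * D / 2 * ((p + ε'') * D) + ε'' * D :=
          add_le_add (mul_le_mul_of_nonneg_left habs1s (by positivity)) he
  have t1 : (p + ε'') * D ≤ ε / 2 := by
    have h1 : p + ε'' ≤ 1 := by linarith
    calc (p + ε'') * D ≤ 1 * D := mul_le_mul_of_nonneg_right h1 hD0
      _ = D := one_mul D
      _ ≤ ε / 2 := hDε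
  have t2 : p * D / 2 * ((p + ε'') * D) ≤ p * D / 2 * (ε / 2) :=
    mul_le_mul_of_nonneg_left t1 (by positivity)
  have t3 : ε'' * D ≤ p * ε / 4 * D := mul_le_mul_of_nonneg_right hε''2 hD0
  have hfin : p * D / 2 * ((p + ε'') * D) + ε'' * D ≤ ε * G := by
    have : p * D / 2 * (ε / 2) + p * ε / 4 * D = ε * (p * D / 2) := by ring
    rw [hGdef]
    linarith
  calc |1 - s - G| = |(1 - s) - G| := by ring_nf
    _ ≤ |(1 - s) - G| * (1 + s) := hw1
    _ = |p * D * (1 - s) / 2 - e| := hw2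
    _ ≤ p * D / 2 * ((p + ε'') * D) + ε'' * D := hw3
    _ ≤ ε * G := hfin
end

section
/- Let a_i>0, i=1,…,n+1, with max_i a_i = 1, define σ(t) = (Σ_{i=1}^{n+1} a_i²(t_i−t_{i−1}))^{1/2} for t∈S_n (t₀=0, t_{n+1}=1), and let N = {i : a_i=1}, N^c = {i : a_i<1}, m = #N. Then: (a) if m = n+1, σ(t) = 1 for all t∈S_n; (b) if m < n+1, σ attains its maximum value 1 on S_n exactly on M = {t∈S_n : Σ_{j∈N} (t_j − t_{j−1}) = 1}, and moreover lim_{δ→0} sup_{z∈M} sup { | (1−σ(t)) / ( ½ Σ_{j∈N^c} (1−a_j²)(t_j−t_{j−1}) ) − 1 | : t∈S_n, t∉M, |t−z| ≤ δ } = 0. -/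
open Finset Real Filter Set

lemma telesc : ∀ {n : ℕ} (t : Fin (n+2) → ℝ),
    ∑ i : Fin (n+1), (t i.succ - t i.castSucc) = t (Fin.last (n+1)) - t 0 := by
  intro n
  induction n with
  | zero => intro t; simp [Fin.sum_univ_one]
  | succ n ih =>
    intro t
    rw [Fin.sum_univ_castSucc]
    have h := ih (t ∘ Fin.castSucc)
    simp only [Function.comp] at h
    simp only [Fin.succ_castSucc] at h ⊢
    rw [h]
    simp [Fin.succ_last, Fin.castSucc_zero]

/-- for `α = 1`, `σ(t) = (Σ a_i²(t_i−t_{i−1}))^{1/2}` on the simplex: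
(a) if `m = n+1` (all `a_i = 1`) then `σ ≡ 1` on `Sₙ`;
(b) if `m < n+1` then `σ` attains its maximum value `1` exactly on
`M = {t∈Sₙ : Σ_{j∈N}(t_j−t_{j−1}) = 1}`, and the local expansion
`(1−σ(t)) ∼ ½Σ_{j∈N^c}(1−a_j²)(t_j−t_{j−1})` holds uniformly near `M` (ε-δ form). -/
theorem stmt_12 (n : ℕ) (hn : 1 ≤ n)
    (a : Fin (n+1) → ℝ) (ha : ∀ i, 0 < a i) (ha1 : ∀ i, a i ≤ 1) (hamax : ∃ i, a i = 1) :
    let S : Set (Fin (n+2) → ℝ) :=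
      {t | t 0 = 0 ∧ t (Fin.last (n+1)) = 1 ∧ Monotone t}
    let σ : (Fin (n+2) → ℝ) → ℝ :=
      fun t => Real.sqrt (∑ i : Fin (n+1), (a i)^2 * (t i.succ - t i.castSucc))
    let N : Finset (Fin (n+1)) := Finset.univ.filter (fun i => a i = 1)
    let Nc : Finset (Fin (n+1)) := Finset.univ.filter (fun i => a i < 1)
    let m : ℕ := N.card
    let M : Set (Fin (n+2) → ℝ) :=
      {t | t ∈ S ∧ ∑ j ∈ N, (t j.succ - t j.castSucc) = 1}
    (m = n + 1 → ∀ t ∈ S, σ t = 1) ∧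
    (m < n + 1 →
      ((∀ t ∈ M, σ t = 1) ∧ (∀ t ∈ S, σ t ≤ 1) ∧ (∀ t ∈ S, σ t = 1 → t ∈ M) ∧
        ∀ ε > 0, ∃ δ > 0, ∀ z ∈ M, ∀ t ∈ S, t ∉ M → dist t z ≤ δ →
          |(1 - σ t) /
              ((1/2) * ∑ j ∈ Nc, (1 - (a j)^2) * (t j.succ - t j.castSucc)) - 1| ≤ ε)) := by
  intro S σ N Nc m M
  have ha2 : ∀ i, (a i)^2 ≤ 1 := fun i => by nlinarith [ha i, ha1 i]
  have hNcmem : ∀ i : Fin (n+1), i ∉ Nc → a i = 1 := by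
    intro i hi
    simp only [Nc, Finset.mem_filter, Finset.mem_univ, true_and, not_lt] at hi
    exact le_antisymm (ha1 i) hi
  have hNcmem' : ∀ i ∈ Nc, (a i)^2 < 1 := by
    intro i hi
    simp only [Nc, Finset.mem_filter, Finset.mem_univ, true_and] at hi
    nlinarith [ha i]
  have hdpos : ∀ t ∈ S, ∀ i : Fin (n+1), 0 ≤ t i.succ - t i.castSucc := by
    intro t ht i
    exact sub_nonneg.mpr (ht.2.2 (Fin.castSucc_le_succ i))
  have hsum1 : ∀ t ∈ S, ∑ i : Fin (n+1), (t i.succ - t i.castSucc) = 1 := by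
    intro t ht
    rw [telesc t, ht.2.1, ht.1]; ring
  have hsplit : ∀ t ∈ S, ∑ i : Fin (n+1), (a i)^2 * (t i.succ - t i.castSucc)
      = 1 - ∑ j ∈ Nc, (1 - (a j)^2) * (t j.succ - t j.castSucc) := by
    intro t ht
    have h1 : ∑ j ∈ Nc, (1 - (a j)^2) * (t j.succ - t j.castSucc)
        = ∑ j : Fin (n+1), (1 - (a j)^2) * (t j.succ - t j.castSucc) := by
      apply Finset.sum_subset (Finset.subset_univ _)
      intro i _ hi
      rw [hNcmem i hi]; ring
    rw [h1, eq_sub_iff_add_eq, ← Finset.sum_add_distrib]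
    exact (Finset.sum_congr rfl (fun i _ => by ring)).trans (hsum1 t ht)
  have hu2nonneg : ∀ t ∈ S, 0 ≤ ∑ j ∈ Nc, (1 - (a j)^2) * (t j.succ - t j.castSucc) := by
    intro t ht
    exact Finset.sum_nonneg fun j _ => mul_nonneg (by linarith [ha2 j]) (hdpos t ht j)
  have hσnn : ∀ t ∈ S, 0 ≤ ∑ i : Fin (n+1), (a i)^2 * (t i.succ - t i.castSucc) := by
    intro t ht
    exact Finset.sum_nonneg fun i _ => mul_nonneg (sq_nonneg _) (hdpos t ht i)
  have hNsum : ∀ t ∈ S, (∑ j ∈ N, (t j.succ - t j.castSucc))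
      + ∑ j ∈ Nc, (t j.succ - t j.castSucc) = 1 := by
    intro t ht
    have hNc_eq : Nc = Finset.univ.filter (fun i => ¬ a i = 1) := by
      apply Finset.filter_congr
      intro i _
      simp [lt_iff_le_and_ne, ha1 i]
    rw [hNc_eq]
    rw [Finset.sum_filter_add_sum_filter_not Finset.univ (fun i => a i = 1)]
    exact hsum1 t ht
  have hMiff : ∀ t ∈ S,
      ((∑ j ∈ Nc, (1 - (a j)^2) * (t j.succ - t j.castSucc)) = 0 ↔ t ∈ M) := by
    intro t ht
    constructor
    · intro h0
      have hz : ∀ j ∈ Nc, (1 - (a j)^2) * (t j.succ - t j.castSucc) = 0 := by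
        rw [← Finset.sum_eq_zero_iff_of_nonneg
          (fun j _ => mul_nonneg (by linarith [ha2 j]) (hdpos t ht j))]
        exact h0
      have hdz : ∀ j ∈ Nc, (t j.succ - t j.castSucc) = 0 := by
        intro j hj
        have := hz j hj
        have h1 : (1 : ℝ) - (a j)^2 ≠ 0 := by
          have := hNcmem' j hj; linarith
        exact (mul_eq_zero.mp this).resolve_left h1
      refine ⟨ht, ?_⟩
      have : ∑ j ∈ Nc, (t j.succ - t j.castSucc) = 0 := Finset.sum_eq_zero hdz
      have := hNsum t ht
      linarith
    · intro htM
      have h1 : ∑ j ∈ Nc, (t j.succ - t j.castSucc) = 0 := by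
        have := hNsum t ht
        have := htM.2
        linarith
      have hdz : ∀ j ∈ Nc, (t j.succ - t j.castSucc) = 0 := by
        rw [← Finset.sum_eq_zero_iff_of_nonneg (fun j _ => hdpos t ht j)]
        exact h1
      exact Finset.sum_eq_zero fun j hj => by rw [hdz j hj]; ring
  constructor
  · -- part (a)
    intro hm t ht
    have hN : N = Finset.univ :=
      Finset.eq_univ_of_card _ (by simpa using hm)
    have hall : ∀ i, a i = 1 := by
      intro i
      have : i ∈ N := hN ▸ Finset.mem_univ i
      exact (Finset.mem_filter.mp this).2
    have h1 : ∑ i : Fin (n+1), (a i)^2 * (t i.succ - t i.castSucc) = 1 := by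
      rw [← hsum1 t ht]
      exact Finset.sum_congr rfl fun i _ => by rw [hall i]; ring
    simp only [σ, h1, Real.sqrt_one]
  · -- part (b)
    intro hm
    refine ⟨?_, ?_, ?_, ?_⟩
    · intro t htM
      have ht := htM.1
      have h0 := (hMiff t ht).mpr htM
      simp only [σ, hsplit t ht, h0, sub_zero, Real.sqrt_one]
    · intro t ht
      simp only [σ]
      exact Real.sqrt_le_one.mpr (by linarith [hσnn t ht, hu2nonneg t ht, hsplit t ht])
    · intro t ht hσ1
      simp only [σ] at hσ1
      have := Real.sqrt_eq_one.mp hσ1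
      rw [hsplit t ht] at this
      exact (hMiff t ht).mp (by linarith)
    · intro ε hε
      refine ⟨ε / (2*(n+1)), by positivity, ?_⟩
      intro z hz t ht htM hdist
      set u2 := ∑ j ∈ Nc, (1 - (a j)^2) * (t j.succ - t j.castSucc) with hu2def
      have hu2pos : 0 < u2 :=
        lt_of_le_of_ne (hu2nonneg t ht) (fun h => htM ((hMiff t ht).mp h.symm))
      have hu2le1 : u2 ≤ 1 := by
        have := hsplit t ht
        have := hσnn t ht
        linarith
      -- u2 ≤ ε
      have hcard : (Nc.card : ℝ) ≤ (n+1 : ℝ) := by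
        have := Finset.card_le_univ Nc
        simp only [Finset.card_univ, Fintype.card_fin] at this
        exact_mod_cast this
      have hdz0 : ∑ j ∈ Nc, (z j.succ - z j.castSucc) = 0 := by
        have := hNsum z hz.1
        have := hz.2
        linarith
      have hdbound : ∀ j : Fin (n+1),
          t j.succ - t j.castSucc ≤ (z j.succ - z j.castSucc) + 2 * (ε / (2*(n+1))) := by
        intro j
        have h1 : dist (t j.succ) (z j.succ) ≤ ε / (2*(n+1)) :=
          le_trans (dist_le_pi_dist t z j.succ) hdist
        have h2 : dist (t j.castSucc) (z j.castSucc) ≤ ε / (2*(n+1)) :=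
          le_trans (dist_le_pi_dist t z j.castSucc) hdist
        rw [Real.dist_eq] at h1 h2
        have := abs_le.mp h1
        have := abs_le.mp h2
        linarith [this.1, this.2, (abs_le.mp h1).1, (abs_le.mp h1).2]
      have hu2ε : u2 ≤ ε := by
        have h1 : u2 ≤ ∑ j ∈ Nc, (t j.succ - t j.castSucc) := by
          apply Finset.sum_le_sum
          intro j hj
          exact mul_le_of_le_one_left (hdpos t ht j) (by linarith [sq_nonneg (a j)])
        have h2 : ∑ j ∈ Nc, (t j.succ - t j.castSucc)
            ≤ ∑ j ∈ Nc, ((z j.succ - z j.castSucc) + 2 * (ε / (2*(n+1)))) :=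
          Finset.sum_le_sum fun j _ => hdbound j
        rw [Finset.sum_add_distrib, hdz0, Finset.sum_const, zero_add, nsmul_eq_mul] at h2
        have h3 : (Nc.card : ℝ) * (2 * (ε / (2*(n+1)))) ≤ ε := by
          have hne : (0:ℝ) < (n:ℝ) + 1 := by positivity
          rw [show (2 : ℝ) * (ε / (2*(n+1))) = ε / (n+1) by field_simp]
          rw [div_eq_mul_inv]
          calc (Nc.card : ℝ) * (ε * ((n:ℝ)+1)⁻¹) ≤ ((n:ℝ)+1) * (ε * ((n:ℝ)+1)⁻¹) := by
                apply mul_le_mul_of_nonneg_right hcard (by positivity)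
            _ = ε := by field_simp
        linarith
      -- algebra
      have hσt : σ t = Real.sqrt (1 - u2) := by
        simp only [σ, hsplit t ht, hu2def]
      set s := Real.sqrt (1 - u2) with hsdef
      have hs0 : 0 ≤ s := Real.sqrt_nonneg _
      have hssq : s^2 = 1 - u2 := Real.sq_sqrt (by linarith)
      have hs1 : s ≤ 1 := Real.sqrt_le_one.mpr (by linarith)
      have h1s : (0:ℝ) < 1 + s := by linarith
      have key : (1 - s) / ((1/2) * u2) - 1 = (1 - s)/(1 + s) := by
        rw [div_sub_one (by positivity), div_eq_div_iff (by positivity) h1s.ne']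
        linear_combination -hssq
      rw [hσt, key,
        abs_of_nonneg (div_nonneg (by linarith) h1s.le)]
      calc (1 - s)/(1 + s) ≤ 1 - s := div_le_self (by linarith) (by linarith)
        _ ≤ 1 - s^2 := by nlinarith
        _ = u2 := by linarith
        _ ≤ ε := hu2ε
end

section
/- Let a_i>0, i=1,…,n+1, with max_i a_i = 1, and define on S_n (t₀=0, t_{n+1}=1): σ(t) = (Σ_{i=1}^{n+1} a_i²(t_i−t_{i−1}))^{1/2}, C(s,t) = Σ_{i=1}^{n+1} a_i² · ½(|t_i−s_{i−1}| + |s_i−t_{i−1}| − |t_i−s_i| − |t_{i−1}−s_{i−1}|), r(s,t) = C(s,t)/(σ(s)σ(t)), and M = {t∈S_n : Σ_{j∈N}(t_j−t_{j−1}) = 1} where N = {i : a_i=1} (if N = {1,…,n+1} then M = S_n). Then lim_{δ→0} sup_{z∈M} sup { | (1−r(s,t)) / ( ½ Σ_{i=1}^{n+1} a_i² min(|t_{i−1}−s_{i−1}|+|t_i−s_i|, (t_i−t_{i−1})+(s_i−s_{i−1})) ) − 1 | : s,t∈S_n, s≠t, |s−z|<δ, |t−z|<δ } = 0. -/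
open Finset Real Filter Set

set_option maxHeartbeats 1000000

private lemma tele {N : ℕ} (f : Fin (N+1) → ℝ) :
    ∑ i : Fin N, (f i.succ - f i.castSucc) = f (Fin.last N) - f 0 := by
  induction N with
  | zero => simp
  | succ N ih =>
    rw [Fin.sum_univ_castSucc]
    have h := ih (fun i => f i.castSucc)
    simp only [Fin.succ_castSucc, Fin.succ_last]
    rw [h, Fin.castSucc_zero]
    ring

private lemma key (p q u v : ℝ) (hpq : p ≤ q) (huv : u ≤ v) :
    (q - p) + (v - u) - (|v - p| + |q - u| - |v - q| - |u - p|) =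
    min (|u - p| + |v - q|) ((v - u) + (q - p)) := by
  rcases abs_cases (v - p) with ⟨e1, s1⟩ | ⟨e1, s1⟩ <;>
  rcases abs_cases (q - u) with ⟨e2, s2⟩ | ⟨e2, s2⟩ <;>
  rcases abs_cases (v - q) with ⟨e3, s3⟩ | ⟨e3, s3⟩ <;>
  rcases abs_cases (u - p) with ⟨e4, s4⟩ | ⟨e4, s4⟩ <;>
  rw [e1, e2, e3, e4, min_def] <;> split_ifs <;> linarith

/-- for `α = 1`, with `r(s,t) = C(s,t)/(σ(s)σ(t))` the correlation of `Z¹`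
and `M = {t∈Sₙ : Σ_{j∈N}(t_j−t_{j−1}) = 1}` (where `N = {i : a_i = 1}`), the expansion
`1−r(s,t) ∼ ½ Σ_i a_i² min(|t_{i−1}−s_{i−1}|+|t_i−s_i|, (t_i−t_{i−1})+(s_i−s_{i−1}))`
holds uniformly over `z ∈ M` and `s,t → z`, `s ≠ t` (ε-δ form). -/
theorem stmt_13 (n : ℕ) (hn : 1 ≤ n)
    (a : Fin (n+1) → ℝ) (ha : ∀ i, 0 < a i) (ha1 : ∀ i, a i ≤ 1) (hamax : ∃ i, a i = 1) :
    let S : Set (Fin (n+2) → ℝ) :=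
      {t | t 0 = 0 ∧ t (Fin.last (n+1)) = 1 ∧ Monotone t}
    let σ : (Fin (n+2) → ℝ) → ℝ :=
      fun t => Real.sqrt (∑ i : Fin (n+1), (a i)^2 * (t i.succ - t i.castSucc))
    let C : (Fin (n+2) → ℝ) → (Fin (n+2) → ℝ) → ℝ := fun s t =>
      ∑ i : Fin (n+1), (a i)^2 *
        ((|t i.succ - s i.castSucc| + |s i.succ - t i.castSucc|
          - |t i.succ - s i.succ| - |t i.castSucc - s i.castSucc|) / 2)
    let r : (Fin (n+2) → ℝ) → (Fin (n+2) → ℝ) → ℝ := fun s t => C s t / (σ s * σ t)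
    let N : Finset (Fin (n+1)) := Finset.univ.filter (fun i => a i = 1)
    let M : Set (Fin (n+2) → ℝ) :=
      {t | t ∈ S ∧ ∑ j ∈ N, (t j.succ - t j.castSucc) = 1}
    ∀ ε > 0, ∃ δ > 0, ∀ z ∈ M, ∀ s ∈ S, ∀ t ∈ S, s ≠ t →
      dist s z < δ → dist t z < δ →
      |(1 - r s t) /
          ((1/2) * ∑ i : Fin (n+1), (a i)^2 *
            min (|t i.castSucc - s i.castSucc| + |t i.succ - s i.succ|)
              ((t i.succ - t i.castSucc) + (s i.succ - s i.castSucc))) - 1| ≤ ε := by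
  intro S σ C r N M ε hε
  -- minimum of a
  obtain ⟨j0, -, hj0⟩ := Finset.exists_min_image Finset.univ a ⟨0, Finset.mem_univ 0⟩
  set c : ℝ := (a j0)^2 with hc_def
  have hc : 0 < c := pow_pos (ha j0) 2
  have hcle : ∀ i, c ≤ (a i)^2 := by
    intro i
    have h1 := hj0 i (Finset.mem_univ i)
    nlinarith [(ha j0).le, (ha i).le]
  have hc1 : c ≤ 1 := by nlinarith [ha1 j0, (ha j0).le]
  refine ⟨ε * c^2 / ((n+1) * (8*c+1)),
    div_pos (mul_pos hε (pow_pos hc 2)) (mul_pos (by positivity) (by linarith)), ?_⟩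
  set δ : ℝ := ε * c^2 / ((n+1) * (8*c+1)) with hδ_def
  have hδ : 0 < δ := div_pos (mul_pos hε (pow_pos hc 2)) (mul_pos (by positivity) (by linarith))
  have hδeq : δ * ((n+1) * (8*c+1)) = ε * c^2 := by
    rw [hδ_def]; field_simp
  intro z hz s hs t ht hst hsz htz
  -- basic facts about members of S
  have hmono : ∀ x, x ∈ S → ∀ i : Fin (n+1), x i.castSucc ≤ x i.succ := by
    intro x hx i
    exact hx.2.2 (Fin.castSucc_le_succ i)
  have htel : ∀ x, x ∈ S → ∑ i : Fin (n+1), (x i.succ - x i.castSucc) = 1 := by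
    intro x hx
    rw [tele x, hx.2.1, hx.1]; ring
  -- Q bounds
  set Q : (Fin (n+2) → ℝ) → ℝ :=
    fun x => ∑ i : Fin (n+1), (a i)^2 * (x i.succ - x i.castSucc) with hQ_def
  have hQnn : ∀ x, x ∈ S → 0 ≤ Q x := by
    intro x hx
    exact Finset.sum_nonneg fun i _ => mul_nonneg (sq_nonneg _) (by linarith [hmono x hx i])
  have hQle1 : ∀ x, x ∈ S → Q x ≤ 1 := by
    intro x hx
    calc Q x ≤ ∑ i : Fin (n+1), (x i.succ - x i.castSucc) := by
          refine Finset.sum_le_sum fun i _ => ?_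
          have h1 : (a i)^2 ≤ 1 := by nlinarith [ha1 i, (ha i).le]
          nlinarith [hmono x hx i]
      _ = 1 := htel x hx
  have hQgec : ∀ x, x ∈ S → c ≤ Q x := by
    intro x hx
    calc c = ∑ i : Fin (n+1), c * (x i.succ - x i.castSucc) := by
          rw [← Finset.mul_sum, htel x hx, mul_one]
      _ ≤ Q x := Finset.sum_le_sum fun i _ => by
          nlinarith [hmono x hx i, hcle i]
  -- per-coordinate distance bounds
  have hdist : ∀ (x y : Fin (n+2) → ℝ), ∀ i : Fin (n+2), |x i - y i| ≤ dist x y := by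
    intro x y i
    rw [← Real.dist_eq]
    exact dist_le_pi_dist x y i
  set m : Fin (n+1) → ℝ := fun i =>
    min (|t i.castSucc - s i.castSucc| + |t i.succ - s i.succ|)
      ((t i.succ - t i.castSucc) + (s i.succ - s i.castSucc)) with hm_def
  set D0 : ℝ := ∑ i : Fin (n+1), (a i)^2 * m i with hD0_def
  have hmnn : ∀ i, 0 ≤ m i := fun i =>
    le_min (by positivity) (by nlinarith [hmono s hs i, hmono t ht i])
  -- the key identity : Q s + Q t - 2 C s t = D0
  have I1 : Q s + Q t - 2 * C s t = D0 := by
    simp only [hQ_def, hD0_def, C, Finset.mul_sum, ← Finset.sum_add_distrib,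
      ← Finset.sum_sub_distrib]
    refine Finset.sum_congr rfl fun i _ => ?_
    have k := key (s i.castSucc) (s i.succ) (t i.castSucc) (t i.succ)
      (hmono s hs i) (hmono t ht i)
    rw [hm_def]
    linear_combination (a i)^2 * k
  -- positivity of D0
  have hD0nn : 0 ≤ D0 := Finset.sum_nonneg fun i _ => mul_nonneg (sq_nonneg _) (hmnn i)
  have hD0pos : 0 < D0 := by
    rcases hD0nn.lt_or_eq with h | h
    · exact h
    · exfalso
      apply hst
      have hz0 : ∀ i ∈ Finset.univ, (a i)^2 * m i = 0 := by
        rw [← Finset.sum_eq_zero_iff_of_nonneg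
          (fun i _ => mul_nonneg (sq_nonneg _) (hmnn i))]
        exact h.symm
      have hm0 : ∀ i, m i = 0 := by
        intro i
        have := hz0 i (Finset.mem_univ i)
        have ha2 : (a i)^2 ≠ 0 := pow_ne_zero 2 (ha i).ne'
        exact (mul_eq_zero.mp this).resolve_left ha2
      funext i
      induction i using Fin.induction with
      | zero => rw [hs.1, ht.1]
      | succ i ih =>
        have hmi := hm0 i
        rw [hm_def] at hmi
        simp only at hmi
        rcases min_cases (|t i.castSucc - s i.castSucc| + |t i.succ - s i.succ|)
          ((t i.succ - t i.castSucc) + (s i.succ - s i.castSucc)) with ⟨h1, h2⟩ | ⟨h1, h2⟩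
        · rw [h1] at hmi
          have h3 : |t i.succ - s i.succ| ≤ 0 := by
            have := abs_nonneg (t i.castSucc - s i.castSucc); linarith
          have h4 : t i.succ - s i.succ = 0 :=
            abs_eq_zero.mp (le_antisymm h3 (abs_nonneg _))
          linarith
        · rw [h1] at hmi
          have h4 := hmono s hs i
          have h5 := hmono t ht i
          linarith
  -- D0 is small
  have hstδ : ∀ i : Fin (n+2), |t i - s i| ≤ 2 * δ := by
    intro i
    calc |t i - s i| ≤ |t i - z i| + |z i - s i| := abs_sub_le _ _ _
      _ ≤ 2 * δ := by
          have h1 := hdist t z i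
          have h2 := hdist s z i
          rw [abs_sub_comm (z i) (s i)] at *
          linarith
  have hD0le : D0 ≤ 4 * (n+1) * δ := by
    rw [hD0_def]
    calc ∑ i : Fin (n+1), (a i)^2 * m i ≤ ∑ i : Fin (n+1), 4 * δ := by
          refine Finset.sum_le_sum fun i _ => ?_
          have h1 : (a i)^2 ≤ 1 := by nlinarith [ha1 i, (ha i).le]
          have h2 : m i ≤ 4 * δ := by
            rw [hm_def]
            refine le_trans (min_le_left _ _) ?_
            linarith [hstδ i.castSucc, hstδ i.succ]
          nlinarith [hmnn i]
      _ = 4 * (n+1) * δ := by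
          rw [Finset.sum_const, Finset.card_univ, Fintype.card_fin, nsmul_eq_mul]
          push_cast; ring
  -- |Q s - Q t| ≤ D0
  have hQst : |Q s - Q t| ≤ D0 := by
    rw [hQ_def, hD0_def]
    simp only [← Finset.sum_sub_distrib]
    refine le_trans (Finset.abs_sum_le_sum_abs _ _) (Finset.sum_le_sum fun i _ => ?_)
    rw [show (a i)^2 * (s i.succ - s i.castSucc) - (a i)^2 * (t i.succ - t i.castSucc)
        = (a i)^2 * ((s i.succ - s i.castSucc) - (t i.succ - t i.castSucc)) by ring,
      abs_mul, abs_of_nonneg (sq_nonneg (a i))]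
    refine mul_le_mul_of_nonneg_left ?_ (sq_nonneg (a i))
    rw [hm_def]
    refine le_min ?_ ?_
    · rcases abs_cases (s i.succ - s i.castSucc - (t i.succ - t i.castSucc)) with ⟨e,_⟩|⟨e,_⟩ <;>
      rcases abs_cases (t i.castSucc - s i.castSucc) with ⟨e1,_⟩|⟨e1,_⟩ <;>
      rcases abs_cases (t i.succ - s i.succ) with ⟨e2,_⟩|⟨e2,_⟩ <;>
      rw [e, e1, e2] <;> linarith
    · rcases abs_cases (s i.succ - s i.castSucc - (t i.succ - t i.castSucc)) with ⟨e,_⟩|⟨e,_⟩ <;>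
      rw [e] <;> linarith [hmono s hs i, hmono t ht i]
  -- Q z = 1
  have hQz : Q z = 1 := by
    have hzS : z ∈ S := hz.1
    have hzN : ∑ j ∈ N, (z j.succ - z j.castSucc) = 1 := hz.2
    have hsplit := Finset.sum_filter_add_sum_filter_not Finset.univ
      (fun i => a i = 1) (fun j => (z j.succ - z j.castSucc))
    have hnotsum : ∑ j ∈ Finset.univ.filter (fun i => ¬ a i = 1),
        (z j.succ - z j.castSucc) = 0 := by
      have h1 := htel z hzS
      simp only [N] at hzN
      linarith
    have hnotzero : ∀ j ∈ Finset.univ.filter (fun i => ¬ a i = 1),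
        (z j.succ - z j.castSucc) = 0 := by
      rw [← Finset.sum_eq_zero_iff_of_nonneg (fun j _ => by linarith [hmono z hzS j])]
      exact hnotsum
    have hsplit2 := Finset.sum_filter_add_sum_filter_not Finset.univ
      (fun i => a i = 1) (fun j => (a j)^2 * (z j.succ - z j.castSucc))
    rw [hQ_def]
    simp only
    rw [← hsplit2]
    simp only [N] at hzN
    have e1 : ∑ j ∈ Finset.univ.filter (fun i => a i = 1),
        (a j)^2 * (z j.succ - z j.castSucc) = 1 := by
      have e0 : ∑ j ∈ Finset.univ.filter (fun i => a i = 1),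
          (a j)^2 * (z j.succ - z j.castSucc)
          = ∑ j ∈ Finset.univ.filter (fun i => a i = 1), (z j.succ - z j.castSucc) := by
        refine Finset.sum_congr rfl fun j hj => ?_
        rw [(Finset.mem_filter.mp hj).2]
        ring
      rw [e0, hzN]
    have e2 : ∑ j ∈ Finset.univ.filter (fun i => ¬ a i = 1),
        (a j)^2 * (z j.succ - z j.castSucc) = 0 := by
      refine Finset.sum_eq_zero fun j hj => ?_
      rw [hnotzero j hj, mul_zero]
    rw [e1, e2, add_zero]
  -- Q close to 1
  have hQnear : ∀ x, x ∈ S → dist x z < δ → |Q x - 1| ≤ 2 * (n+1) * δ := by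
    intro x hx hxz
    have goal2 : |Q x - Q z| ≤ 2 * (n+1) * δ := by
      simp only [hQ_def]
      rw [← Finset.sum_sub_distrib]
      calc |∑ i : Fin (n+1), ((a i)^2 * (x i.succ - x i.castSucc)
              - (a i)^2 * (z i.succ - z i.castSucc))| ≤
          ∑ i : Fin (n+1), |(a i)^2 * (x i.succ - x i.castSucc)
              - (a i)^2 * (z i.succ - z i.castSucc)| := Finset.abs_sum_le_sum_abs _ _
        _ ≤ ∑ i : Fin (n+1), (2*δ) := by
            refine Finset.sum_le_sum fun i _ => ?_
            have h1 : (a i)^2 ≤ 1 := by nlinarith [ha1 i, (ha i).le]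
            have h2 : |(x i.succ - x i.castSucc) - (z i.succ - z i.castSucc)| ≤ 2*δ := by
              have h3 := (hdist x z i.succ).trans_lt hxz
              have h4 := (hdist x z i.castSucc).trans_lt hxz
              rcases abs_cases ((x i.succ - x i.castSucc) - (z i.succ - z i.castSucc)) with ⟨e,_⟩|⟨e,_⟩ <;>
              rcases abs_cases (x i.succ - z i.succ) with ⟨e1,_⟩|⟨e1,_⟩ <;>
              rcases abs_cases (x i.castSucc - z i.castSucc) with ⟨e2,_⟩|⟨e2,_⟩ <;>
              rw [e] <;> rw [e1] at h3 <;> rw [e2] at h4 <;> linarith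
            rw [show (a i)^2 * (x i.succ - x i.castSucc) - (a i)^2 * (z i.succ - z i.castSucc)
                = (a i)^2 * ((x i.succ - x i.castSucc) - (z i.succ - z i.castSucc)) by ring,
              abs_mul, abs_of_nonneg (sq_nonneg (a i))]
            nlinarith [abs_nonneg ((x i.succ - x i.castSucc) - (z i.succ - z i.castSucc)),
              sq_nonneg (a i)]
        _ = 2 * (n+1) * δ := by
            rw [Finset.sum_const, Finset.card_univ, Fintype.card_fin, nsmul_eq_mul]
            push_cast; ring
    rw [hQz] at goal2
    exact goal2
  -- sigma facts
  set A := σ s with hA_def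
  set B := σ t with hB_def
  have hAs : A = Real.sqrt (Q s) := rfl
  have hBs : B = Real.sqrt (Q t) := rfl
  clear_value c δ Q m D0 A B
  have hA2 : A^2 = Q s := by rw [hAs]; exact Real.sq_sqrt (hQnn s hs)
  have hB2 : B^2 = Q t := by rw [hBs]; exact Real.sq_sqrt (hQnn t ht)
  have hAnn : 0 ≤ A := hAs ▸ Real.sqrt_nonneg _
  have hBnn : 0 ≤ B := hBs ▸ Real.sqrt_nonneg _
  have hA1 : A ≤ 1 := by nlinarith [hQle1 s hs]
  have hB1 : B ≤ 1 := by nlinarith [hQle1 t ht]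
  have hcsqrt : Real.sqrt c ^ 2 = c := Real.sq_sqrt hc.le
  have hAgec : Real.sqrt c ≤ A := by rw [hAs]; exact Real.sqrt_le_sqrt (hQgec s hs)
  have hBgec : Real.sqrt c ≤ B := by rw [hBs]; exact Real.sqrt_le_sqrt (hQgec t ht)
  have hscpos : 0 < Real.sqrt c := Real.sqrt_pos.mpr hc
  have hABgec : c ≤ A * B := by nlinarith
  have hABpos : 0 < A * B := lt_of_lt_of_le hc hABgec
  -- |x-1| ≤ |x^2-1| for 0 ≤ x
  have habs1 : ∀ x : ℝ, 0 ≤ x → |x - 1| ≤ |x^2 - 1| := by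
    intro x hx
    rcases abs_cases (x-1) with ⟨e,he⟩|⟨e,he⟩ <;>
    rcases abs_cases (x^2-1) with ⟨e1,h1⟩|⟨e1,h1⟩ <;>
    rw [e, e1] <;> nlinarith
  have hA1near : |A - 1| ≤ 2*(n+1)*δ := by
    have h := habs1 A hAnn
    rw [hA2] at h
    exact h.trans (hQnear s hs hsz)
  have hB1near : |B - 1| ≤ 2*(n+1)*δ := by
    have h := habs1 B hBnn
    rw [hB2] at h
    exact h.trans (hQnear t ht htz)
  have hKnear : |1 - A*B| ≤ 4*(n+1)*δ := by
    have e : 1 - A*B = (1-A) + A*(1-B) := by ring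
    rw [e]
    have h1 : |1-A| ≤ 2*(n+1)*δ := by rw [abs_sub_comm]; exact hA1near
    have h2 : |A*(1-B)| ≤ 2*(n+1)*δ := by
      rw [abs_mul, abs_of_nonneg hAnn, abs_sub_comm]
      calc A * |B-1| ≤ 1 * |B-1| := mul_le_mul_of_nonneg_right hA1 (abs_nonneg _)
        _ ≤ 2*(n+1)*δ := by rw [one_mul]; exact hB1near
    calc |(1-A) + A*(1-B)| ≤ |1-A| + |A*(1-B)| := abs_add_le _ _
      _ ≤ 4*(n+1)*δ := by linarith
  -- (A-B)^2 bound
  have hA2B2 : |A^2 - B^2| ≤ D0 := by rw [hA2, hB2]; exact hQst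
  have h5 : (A^2-B^2)^2 ≤ D0^2 := by
    have := abs_le.mp hA2B2
    nlinarith
  have hA2c : c ≤ A^2 := by rw [hA2]; exact hQgec s hs
  have hB2c : c ≤ B^2 := by rw [hB2]; exact hQgec t ht
  have h6 : 4*c ≤ (A+B)^2 := by
    have e : (A+B)^2 = A^2 + 2*(A*B) + B^2 := by ring
    rw [e]
    linarith [hA2c, hB2c, hABgec]
  have h7 : (A-B)^2*(A+B)^2 = (A^2-B^2)^2 := by ring
  have hABd : (A-B)^2 * (4*c) ≤ D0^2 := by
    calc (A-B)^2 * (4*c) ≤ (A-B)^2 * (A+B)^2 := mul_le_mul_of_nonneg_left h6 (sq_nonneg _)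
      _ = (A^2-B^2)^2 := h7
      _ ≤ D0^2 := h5
  -- value of C s t
  have hCval : C s t = (A^2 + B^2 - D0)/2 := by rw [hA2, hB2]; linarith [I1]
  -- rewrite the goal
  simp only [r]
  rw [← hA_def, ← hB_def, hCval]
  have hEq : (1 - (A^2 + B^2 - D0)/2 / (A*B)) / ((1/2)*D0) - 1
      = (D0*(1-A*B) - (A-B)^2) / ((A*B)*D0) := by
    have hA0 : A ≠ 0 := left_ne_zero_of_mul hABpos.ne'
    have hB0 : B ≠ 0 := right_ne_zero_of_mul hABpos.ne'
    have hD00 : D0 ≠ 0 := hD0pos.ne'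
    field_simp
    ring
  rw [hEq, abs_div, abs_of_pos (mul_pos hABpos hD0pos), div_le_iff₀ (mul_pos hABpos hD0pos)]
  have hnum : |D0*(1-A*B) - (A-B)^2| ≤ D0*(4*(n+1)*δ) + (A-B)^2 := by
    have hK' := abs_le.mp hKnear
    rcases abs_cases (D0*(1-A*B) - (A-B)^2) with ⟨e,_⟩|⟨e,_⟩ <;> rw [e] <;>
    linarith [mul_le_mul_of_nonneg_left hK'.2 hD0nn,
      mul_le_mul_of_nonneg_left (neg_le.mp hK'.1) hD0nn, sq_nonneg (A-B)]
  have st1 : (A-B)^2 * c ≤ D0 * ((n+1)*δ) := by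
    have h8 : D0^2 ≤ D0 * (4*(n+1)*δ) := by
      have h8' := mul_le_mul_of_nonneg_left hD0le hD0nn
      rw [pow_two]
      linarith [h8']
    linarith [hABd, h8]
  have st2 : (4*(n+1)*δ)*c + (n+1)*δ ≤ ε * c^2 := by
    have hδnn : (0:ℝ) ≤ δ * ((n:ℝ)+1) := by positivity
    linarith [hδeq, mul_nonneg (mul_nonneg hδnn hc.le) (by norm_num : (0:ℝ) ≤ 4)]
  have st3 : (D0*(4*(n+1)*δ) + (A-B)^2) * c ≤ ε*(A*B*D0) * c := by
    have h9 := mul_le_mul_of_nonneg_left st2 hD0nn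
    have h10 : 0 ≤ ε * D0 * c := by positivity
    linarith [st1, mul_le_mul_of_nonneg_left hABgec h10, h9]
  have final : D0*(4*(n+1)*δ) + (A-B)^2 ≤ ε*(A*B*D0) :=
    le_of_mul_le_mul_right st3 hc
  calc |D0*(1-A*B) - (A-B)^2| ≤ D0*(4*(n+1)*δ) + (A-B)^2 := hnum
    _ ≤ ε*(A*B*D0) := final
    _ = ε*(A*B*D0) := rfl
end

section
/- Let α∈(0,1), a_i>0 for i=1,…,n+1, σ* = (Σ_{i=1}^{n+1} a_i^{2/(1−α)})^{(1−α)/2}, and define f:ℝⁿ→ℝ by f(x) = (α(1−α)(Σ_{i=1}^{n+1} a_i^{2/(1−α)})/4) · ( a₁^{2/(α−1)} x₁² + a_{n+1}^{2/(α−1)} xₙ² + Σ_{i=2}ⁿ a_i^{2/(α−1)} (x_i − x_{i−1})² ). Then ∫_{ℝⁿ} e^{−f(x)} dx = (4π/(α(1−α)))^{n/2} · σ*^{−n/(1−α)} · ( Σ_{j=1}^{n+1} ∏_{i≠j} a_i^{2/(α−1)} )^{−1/2}. -/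
open Finset Real Filter Set MeasureTheory

noncomputable section
namespace Stmt15

def E' (m : ℕ) (x : Fin m → ℝ) (k : ℕ) : ℝ :=
  if h : 1 ≤ k ∧ k ≤ m then x ⟨k - 1, by omega⟩ else 0

def Q (m : ℕ) (c : Fin (m+1) → ℝ) (x : Fin m → ℝ) : ℝ :=
  ∑ i : Fin (m+1), c i * (E' m x ((i:ℕ)+1) - E' m x (i:ℕ))^2

def D (m : ℕ) (c : Fin (m+1) → ℝ) : ℝ :=
  ∑ j, ∏ i ∈ Finset.univ.erase j, c i

/-- the reduced coefficient vector -/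
def red (m : ℕ) (c : Fin (m+2) → ℝ) : Fin (m+1) → ℝ :=
  Fin.snoc (fun i : Fin m => c i.castSucc.castSucc)
    (c ((Fin.last m).castSucc) * c (Fin.last (m+1)) /
      (c ((Fin.last m).castSucc) + c (Fin.last (m+1))))

lemma red_pos (m : ℕ) (c : Fin (m+2) → ℝ) (hc : ∀ i, 0 < c i) : ∀ i, 0 < red m c i := by
  intro i
  refine Fin.lastCases ?_ (fun j => ?_) i
  · have h1 := hc ((Fin.last m).castSucc)
    have h2 := hc (Fin.last (m+1))
    simp only [red, Fin.snoc_last]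
    positivity
  · simp only [red, Fin.snoc_castSucc]
    exact hc _

lemma measurable_E' (m : ℕ) (k : ℕ) : Measurable fun x : Fin m → ℝ => E' m x k := by
  unfold E'
  by_cases h : 1 ≤ k ∧ k ≤ m
  · simp only [h, dif_pos]; exact measurable_pi_apply _
  · simp only [h, dif_neg, not_false_iff]; exact measurable_const

lemma measurable_Q (m : ℕ) (c : Fin (m+1) → ℝ) : Measurable (Q m c) := by
  unfold Q
  exact Finset.measurable_sum _ fun i _ =>
    (measurable_const.mul (((measurable_E' m _).sub (measurable_E' m _)).pow measurable_const))

lemma D_eq (m : ℕ) (c : Fin (m+1) → ℝ) (hc : ∀ i, 0 < c i) :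
    D m c = (∏ i, c i) * ∑ j, (c j)⁻¹ := by
  rw [D, Finset.mul_sum]
  refine Finset.sum_congr rfl fun j _ => ?_
  rw [← Finset.mul_prod_erase Finset.univ c (Finset.mem_univ j)]
  field_simp [(hc j).ne']

lemma D_pos (m : ℕ) (c : Fin (m+1) → ℝ) (hc : ∀ i, 0 < c i) : 0 < D m c := by
  rw [D_eq m c hc]
  exact mul_pos (Finset.prod_pos fun i _ => hc i)
    (Finset.sum_pos (fun j _ => inv_pos.2 (hc j)) Finset.univ_nonempty)

lemma D_rec (m : ℕ) (c : Fin (m+2) → ℝ) (hc : ∀ i, 0 < c i) :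
    D (m+1) c = (c ((Fin.last m).castSucc) + c (Fin.last (m+1))) * D m (red m c) := by
  have hc' := red_pos m c hc
  rw [D_eq _ _ hc, D_eq _ _ hc']
  set cm := c ((Fin.last m).castSucc)
  set cm1 := c (Fin.last (m+1))
  have hm : 0 < cm := hc _
  have hm1 : 0 < cm1 := hc _
  rw [Fin.prod_univ_castSucc (n := m+1), Fin.prod_univ_castSucc (n := m),
    Fin.sum_univ_castSucc (n := m+1), Fin.sum_univ_castSucc (n := m),
    Fin.prod_univ_castSucc (n := m), Fin.sum_univ_castSucc (n := m)]
  simp only [red, Fin.snoc_last, Fin.snoc_castSucc]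
  rw [show c ((Fin.last m).castSucc) = cm from rfl, show c (Fin.last (m+1)) = cm1 from rfl]
  field_simp
  ring

lemma gauss1 (b : ℝ) (hb : 0 < b) (μ : ℝ) :
    ∫⁻ t : ℝ, ENNReal.ofReal (Real.exp (-(b*(t-μ)^2))) = ENNReal.ofReal ((π/b)^((1:ℝ)/2)) := by
  rw [← MeasureTheory.ofReal_integral_eq_lintegral_ofReal]
  · congr 1
    have : ∀ t : ℝ, Real.exp (-(b*(t-μ)^2)) = Real.exp (-b*(t-μ)^2) := by intro t; ring_nf
    simp_rw [this]
    rw [show (fun t => Real.exp (-b*(t-μ)^2)) = fun t => (fun s => Real.exp (-b*s^2)) (t - μ) from rfl]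
    rw [MeasureTheory.integral_sub_right_eq_self (fun s => Real.exp (-b*s^2)) μ]
    rw [integral_gaussian b, Real.sqrt_eq_rpow]
  · have := (integrable_exp_neg_mul_sq hb).comp_sub_right μ
    simpa [neg_mul] using this
  · exact Filter.Eventually.of_forall fun t => (Real.exp_pos _).le

lemma E'_snoc_le (m : ℕ) (y : Fin m → ℝ) (t : ℝ) (k : ℕ) (hk : k ≤ m) :
    E' (m+1) (Fin.snoc y t) k = E' m y k := by
  unfold E'
  by_cases h : 1 ≤ k
  · rw [dif_pos ⟨h, by omega⟩, dif_pos ⟨h, hk⟩]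
    have hk1 : k - 1 < m := by omega
    have : (⟨k-1, by omega⟩ : Fin (m+1)) = Fin.castSucc ⟨k-1, hk1⟩ := rfl
    rw [this, Fin.snoc_castSucc]
  · rw [dif_neg (by omega), dif_neg (by omega)]

lemma E'_snoc_top (m : ℕ) (y : Fin m → ℝ) (t : ℝ) :
    E' (m+1) (Fin.snoc y t) (m+1) = t := by
  unfold E'
  rw [dif_pos ⟨by omega, le_refl _⟩]
  have : (⟨m+1-1, by omega⟩ : Fin (m+1)) = Fin.last m := by ext; simp
  rw [this, Fin.snoc_last]

lemma E'_gt (m : ℕ) (y : Fin m → ℝ) (k : ℕ) (hk : m < k) : E' m y k = 0 := by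
  unfold E'; rw [dif_neg (by omega)]

lemma Q_snoc (m : ℕ) (c : Fin (m+2) → ℝ)
    (hC : 0 < c ((Fin.last m).castSucc) + c (Fin.last (m+1))) (y : Fin m → ℝ) (t : ℝ) :
    Q (m+1) c (Fin.snoc y t) =
      Q m (red m c) y
        + (c ((Fin.last m).castSucc) + c (Fin.last (m+1))) *
            (t - c ((Fin.last m).castSucc) * E' m y m /
              (c ((Fin.last m).castSucc) + c (Fin.last (m+1))))^2 := by
  set cm := c ((Fin.last m).castSucc) with hcm
  set cm1 := c (Fin.last (m+1)) with hcm1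
  unfold Q
  rw [Fin.sum_univ_castSucc (n := m+1), Fin.sum_univ_castSucc (n := m)]
  rw [Fin.sum_univ_castSucc (n := m)]
  simp only [red, Fin.coe_castSucc, Fin.val_last, Fin.snoc_castSucc, Fin.snoc_last]
  have h1 : ∀ i : Fin m, E' (m+1) (Fin.snoc y t) ((i:ℕ)+1) = E' m y ((i:ℕ)+1) :=
    fun i => E'_snoc_le m y t _ (by omega)
  have h2 : ∀ i : Fin m, E' (m+1) (Fin.snoc y t) (i:ℕ) = E' m y (i:ℕ) :=
    fun i => E'_snoc_le m y t _ (by omega)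
  have h3 : E' (m+1) (Fin.snoc y t) (m+1) = t := E'_snoc_top m y t
  have h4 : E' (m+1) (Fin.snoc y t) m = E' m y m := E'_snoc_le m y t _ (le_refl m)
  have h5 : E' (m+1) (Fin.snoc y t) (m+1+1) = 0 := E'_gt _ _ _ (by omega)
  have h6 : E' m y (m+1) = 0 := E'_gt _ _ _ (by omega)
  simp only [h1, h2, h3, h4, h5, h6]
  have key : cm * (t - E' m y m)^2 + cm1 * (0 - t)^2 =
      cm * cm1 / (cm + cm1) * (0 - E' m y m)^2 +
        (cm + cm1) * (t - cm * E' m y m / (cm + cm1))^2 := by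
    field_simp
    ring
  linarith [key]

lemma E'_zero (x : Fin 0 → ℝ) (k : ℕ) : E' 0 x k = 0 := by
  unfold E'; rw [dif_neg]; omega

lemma key (β : ℝ) (hβ : 0 < β) :
    ∀ (m : ℕ) (c : Fin (m+1) → ℝ), (∀ i, 0 < c i) →
    ∫⁻ x : Fin m → ℝ, ENNReal.ofReal (Real.exp (-(β * Q m c x))) =
      ENNReal.ofReal ((π/β) ^ ((m:ℝ)/2) * (D m c) ^ (-(1:ℝ)/2)) := by
  intro m
  induction m with
  | zero =>
    intro c hc
    have hQ : ∀ x : Fin 0 → ℝ, Q 0 c x = 0 := by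
      intro x; simp [Q, E'_zero]
    simp only [hQ]
    have hvol : (volume : Measure (Fin 0 → ℝ)) Set.univ = 1 := by
      rw [MeasureTheory.volume_pi]
      simp [MeasureTheory.Measure.pi_of_empty]
    have hD : D 0 c = 1 := by simp [D]
    simp [hvol, hD]
  | succ m ih =>
    intro c hc
    set cm := c ((Fin.last m).castSucc) with hcm
    set cm1 := c (Fin.last (m+1)) with hcm1
    have hm : 0 < cm := hc _
    have hm1 : 0 < cm1 := hc _
    have hC : 0 < cm + cm1 := by linarith
    have hc' := red_pos m c hc
    have hD' : 0 < D m (red m c) := D_pos _ _ hc'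
    have hFmeas : Measurable fun x : Fin (m+1) → ℝ =>
        ENNReal.ofReal (Real.exp (-(β * Q (m+1) c x))) :=
      (((measurable_Q (m+1) c).const_mul β).neg.exp).ennreal_ofReal
    have hmp := (MeasureTheory.volume_preserving_piFinSuccAbove
      (fun _ : Fin (m+1) => ℝ) (Fin.last m)).symm
    rw [← hmp.lintegral_comp hFmeas]
    rw [MeasureTheory.Measure.volume_eq_prod]
    rw [MeasureTheory.lintegral_prod_symm'
      (fun a : ℝ × (Fin m → ℝ) => ENNReal.ofReal (Real.exp (-(β * Q (m+1) c
        ((MeasurableEquiv.piFinSuccAbove (fun _ : Fin (m+1) => ℝ) (Fin.last m)).symm a)))))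
      (hFmeas.comp (MeasurableEquiv.piFinSuccAbove (fun _ : Fin (m+1) => ℝ)
        (Fin.last m)).symm.measurable)]
    have hsymm : ∀ (t : ℝ) (y : Fin m → ℝ),
        (MeasurableEquiv.piFinSuccAbove (fun _ : Fin (m+1) => ℝ) (Fin.last m)).symm (t, y)
          = Fin.snoc y t := by
      intro t y
      simp [MeasurableEquiv.piFinSuccAbove, Fin.snocEquiv]
    have inner : ∀ y : Fin m → ℝ,
        (∫⁻ t : ℝ, ENNReal.ofReal (Real.exp (-(β * Q (m+1) c
          ((MeasurableEquiv.piFinSuccAbove (fun _ : Fin (m+1) => ℝ)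
            (Fin.last m)).symm (t, y))))))
        = ENNReal.ofReal (Real.exp (-(β * Q m (red m c) y)))
            * ENNReal.ofReal ((π/(β*(cm+cm1)))^((1:ℝ)/2)) := by
      intro y
      have hsplit : ∀ t : ℝ, Real.exp (-(β * Q (m+1) c
          ((MeasurableEquiv.piFinSuccAbove (fun _ : Fin (m+1) => ℝ)
            (Fin.last m)).symm (t, y)))) =
          Real.exp (-(β * Q m (red m c) y))
            * Real.exp (-((β*(cm+cm1)) * (t - cm * E' m y m / (cm+cm1))^2)) := by
        intro t
        rw [hsymm t y, Q_snoc m c hC y t, ← Real.exp_add]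
        congr 1; ring
      simp_rw [hsplit, ENNReal.ofReal_mul (Real.exp_pos _).le]
      rw [lintegral_const_mul' _ _ ENNReal.ofReal_ne_top,
        gauss1 (β*(cm+cm1)) (mul_pos hβ hC) _]
    rw [lintegral_congr inner]
    rw [lintegral_mul_const' _ _ ENNReal.ofReal_ne_top, ih (red m c) hc']
    rw [← ENNReal.ofReal_mul (by positivity)]
    congr 1
    have hπβ : 0 < π/β := div_pos Real.pi_pos hβ
    rw [D_rec m c hc]
    have e1 : ((m+1:ℕ):ℝ)/2 = (m:ℝ)/2 + 1/2 := by push_cast; ring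
    rw [e1, Real.rpow_add hπβ]
    have e2 : π/(β*(cm+cm1)) = (π/β) * (cm+cm1)⁻¹ := by field_simp
    have e3 : ∀ x : ℝ, 0 ≤ x → x ^ (-(1:ℝ)/2) = (x ^ ((1:ℝ)/2))⁻¹ := fun x hx => by
      rw [neg_div, Real.rpow_neg hx]
    rw [e2, Real.mul_rpow hπβ.le (inv_nonneg.2 hC.le), Real.inv_rpow hC.le]
    rw [e3 _ hD'.le, e3 _ (mul_pos hC hD').le, Real.mul_rpow hC.le hD'.le, mul_inv]
    ring
end Stmt15
end

/-- the Gaussian integral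
`∫_{ℝⁿ} exp(−f(x)) dx = (4π/(α(1−α)))^{n/2} σ*^{−n/(1−α)} (Σ_j Π_{i≠j} a_i^{2/(α−1)})^{−1/2}`
where `f(x) = (α(1−α)(Σᵢ a_i^{2/(1−α)})/4)(a₁^{2/(α−1)}x₁² + a_{n+1}^{2/(α−1)}xₙ²
+ Σ_{i=2}ⁿ a_i^{2/(α−1)}(xᵢ−x_{i−1})²)`, written via the zero-extension of `x` to
coordinates `0,…,n+1`. -/
theorem stmt_15 (n : ℕ) (hn : 1 ≤ n) (α : ℝ) (hα : α ∈ Set.Ioo (0:ℝ) 1)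
    (a : Fin (n+1) → ℝ) (ha : ∀ i, 0 < a i) :
    let σstar : ℝ := (∑ i : Fin (n+1), a i ^ ((2:ℝ)/(1-α))) ^ ((1-α)/2)
    let ext : (Fin n → ℝ) → (Fin (n+2) → ℝ) := fun x k =>
      if h : 1 ≤ (k:ℕ) ∧ (k:ℕ) ≤ n then x ⟨(k:ℕ) - 1, by omega⟩ else 0
    let f : (Fin n → ℝ) → ℝ := fun x =>
      (α * (1-α) * (∑ i : Fin (n+1), a i ^ ((2:ℝ)/(1-α))) / 4) *
        ∑ i : Fin (n+1), a i ^ ((2:ℝ)/(α-1)) * (ext x i.succ - ext x i.castSucc)^2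
    ∫ x : Fin n → ℝ, Real.exp (-(f x)) =
      (4 * Real.pi / (α * (1-α))) ^ ((n:ℝ)/2) * σstar ^ (-(n:ℝ)/(1-α)) *
        (∑ j : Fin (n+1), ∏ i ∈ Finset.univ.erase j, a i ^ ((2:ℝ)/(α-1)))
          ^ (-(1:ℝ)/2) := by
  obtain ⟨hα0, hα1⟩ := hα
  have h1α : 0 < 1 - α := by linarith
  intro σstar ext f
  set S : ℝ := ∑ i : Fin (n+1), a i ^ ((2:ℝ)/(1-α)) with hSdef
  have hS : 0 < S := Finset.sum_pos (fun i _ => Real.rpow_pos_of_pos (ha i) _)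
    Finset.univ_nonempty
  set β : ℝ := α * (1-α) * S / 4 with hβdef
  have hβ : 0 < β := by rw [hβdef]; positivity
  set c : Fin (n+1) → ℝ := fun i => a i ^ ((2:ℝ)/(α-1)) with hcdef
  have hc : ∀ i, 0 < c i := fun i => Real.rpow_pos_of_pos (ha i) _
  have hfQ : f = fun x => β * Stmt15.Q n c x := rfl
  have hmeas : Measurable fun x : Fin n → ℝ => Real.exp (-(β * Stmt15.Q n c x)) :=
    ((Stmt15.measurable_Q n c).const_mul β).neg.exp
  rw [hfQ]
  rw [MeasureTheory.integral_eq_lintegral_of_nonneg_ae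
    (Filter.Eventually.of_forall fun x => (Real.exp_pos _).le) hmeas.aestronglyMeasurable]
  rw [Stmt15.key β hβ n c hc, ENNReal.toReal_ofReal (mul_nonneg
    (Real.rpow_nonneg (div_nonneg Real.pi_pos.le hβ.le) _)
    (Real.rpow_nonneg (Stmt15.D_pos n c hc).le _))]
  have h1 : σstar ^ (-(n:ℝ)/(1-α)) = S ^ (-(n:ℝ)/2) := by
    have hσ : σstar = S ^ ((1-α)/2) := rfl
    rw [hσ, ← Real.rpow_mul hS.le]
    congr 1
    field_simp
  have h2 : (π/β)^((n:ℝ)/2) = (4*π/(α*(1-α)))^((n:ℝ)/2) * S^(-(n:ℝ)/2) := by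
    have e : π/β = (4*π/(α*(1-α))) * S⁻¹ := by
      rw [hβdef]
      field_simp
    rw [e, Real.mul_rpow (by positivity) (inv_nonneg.2 hS.le), Real.inv_rpow hS.le,
      ← Real.rpow_neg hS.le]
    congr 1
    ring
  rw [h2, h1]
  rfl
end

section
/- Let α∈(0,1], a_i∈(0,1] for i=1,…,n+1, and for s,t in the simplex S_n (s₀=t₀=0, s_{n+1}=t_{n+1}=1) define V(s,t) = Σ_{i=1}^{n+1} a_i² ( (t_i−t_{i−1})^α + (s_i−s_{i−1})^α − (|t_i−s_{i−1}|^α + |s_i−t_{i−1}|^α − |t_i−s_i|^α − |t_{i−1}−s_{i−1}|^α) ). Then for all s,t∈S_n, V(s,t) ≤ 4 Σ_{i=1}ⁿ |t_i − s_i|^α. -/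
open Finset Real Filter Set

lemma rpow_add_le_add_rpow_real {x y p : ℝ} (hx : 0 ≤ x) (hy : 0 ≤ y)
    (hp : 0 ≤ p) (hp1 : p ≤ 1) : (x + y) ^ p ≤ x ^ p + y ^ p := by
  have h := NNReal.rpow_add_le_add_rpow ⟨x, hx⟩ ⟨y, hy⟩ hp hp1
  have h' := (NNReal.coe_le_coe).2 h
  exact h'

lemma tri_rpow {p c x y : ℝ} (hp : 0 < p) (hp1 : p ≤ 1) (hc : 0 ≤ c)
    (h : c ≤ x + y) (hx : 0 ≤ x) (hy : 0 ≤ y) : c ^ p ≤ x ^ p + y ^ p := by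
  calc c ^ p ≤ (x + y) ^ p := Real.rpow_le_rpow hc h hp.le
    _ ≤ x ^ p + y ^ p := rpow_add_le_add_rpow_real hx hy hp.le hp1

/-- The key four-point inequality. -/
lemma key_ineq {p u v q r : ℝ} (hp : 0 < p) (hp1 : p ≤ 1)
    (huv : u ≤ v) (hqr : q ≤ r) :
    (v - u) ^ p + (r - q) ^ p
      - (|v - q| ^ p + |r - u| ^ p - |v - r| ^ p - |u - q| ^ p)
      ≤ 2 * (|v - r| ^ p + |u - q| ^ p) := by
  set A := (v - u) ^ p
  set B := (r - q) ^ p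
  set C := |v - q| ^ p
  set D := |r - u| ^ p
  set E := |v - r| ^ p
  set F := |u - q| ^ p
  have hA1 : A ≤ E + D := tri_rpow hp hp1 (by linarith)
    (by have h1 := le_abs_self (v - r); have h2 := le_abs_self (r - u); linarith)
    (abs_nonneg _) (abs_nonneg _)
  have hA2 : A ≤ F + C := tri_rpow hp hp1 (by linarith)
    (by have h1 := neg_abs_le (u - q); have h2 := le_abs_self (v - q); linarith)
    (abs_nonneg _) (abs_nonneg _)
  have hB1 : B ≤ E + C := tri_rpow hp hp1 (by linarith)
    (by have h1 := neg_abs_le (v - r); have h2 := le_abs_self (v - q); linarith)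
    (abs_nonneg _) (abs_nonneg _)
  have hB2 : B ≤ F + D := tri_rpow hp hp1 (by linarith)
    (by have h1 := le_abs_self (u - q); have h2 := le_abs_self (r - u); linarith)
    (abs_nonneg _) (abs_nonneg _)
  linarith

/-- for `α ∈ (0,1]` and `a_i ∈ (0,1]`, the incremental variance
`V(s,t) = Σᵢ a_i²((t_i−t_{i−1})^α + (s_i−s_{i−1})^α − (|t_i−s_{i−1}|^α + |s_i−t_{i−1}|^α
− |t_i−s_i|^α − |t_{i−1}−s_{i−1}|^α))` of `Z^α` satisfies
`V(s,t) ≤ 4 Σ_{i=1}ⁿ |t_i − s_i|^α` on the simplex. -/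
theorem stmt_16 (n : ℕ) (hn : 1 ≤ n) (α : ℝ) (hα : α ∈ Set.Ioc (0:ℝ) 1)
    (a : Fin (n+1) → ℝ) (ha : ∀ i, 0 < a i) (ha1 : ∀ i, a i ≤ 1) :
    let S : Set (Fin (n+2) → ℝ) :=
      {t | t 0 = 0 ∧ t (Fin.last (n+1)) = 1 ∧ Monotone t}
    let V : (Fin (n+2) → ℝ) → (Fin (n+2) → ℝ) → ℝ := fun s t =>
      ∑ i : Fin (n+1), (a i)^2 *
        ((t i.succ - t i.castSucc) ^ α + (s i.succ - s i.castSucc) ^ α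
          - (|t i.succ - s i.castSucc| ^ α + |s i.succ - t i.castSucc| ^ α
            - |t i.succ - s i.succ| ^ α - |t i.castSucc - s i.castSucc| ^ α))
    ∀ s ∈ S, ∀ t ∈ S,
      V s t ≤ 4 * ∑ i : Fin n, |t i.succ.castSucc - s i.succ.castSucc| ^ α := by
  intro S V s hs t ht
  obtain ⟨hs0, hs1, hsm⟩ := hs
  obtain ⟨ht0, ht1, htm⟩ := ht
  set f : Fin (n+2) → ℝ := fun j => |t j - s j| ^ α with hf
  have hf0 : f 0 = 0 := by
    simp [hf, ht0, hs0, Real.zero_rpow hα.1.ne']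
  have hflast : f (Fin.last (n+1)) = 0 := by
    simp [hf, ht1, hs1, Real.zero_rpow hα.1.ne']
  have hterm : ∀ i : Fin (n+1),
      (a i)^2 *
        ((t i.succ - t i.castSucc) ^ α + (s i.succ - s i.castSucc) ^ α
          - (|t i.succ - s i.castSucc| ^ α + |s i.succ - t i.castSucc| ^ α
            - |t i.succ - s i.succ| ^ α - |t i.castSucc - s i.castSucc| ^ α))
      ≤ 2 * (f i.succ + f i.castSucc) := by
    intro i
    have hkey : (t i.succ - t i.castSucc) ^ α + (s i.succ - s i.castSucc) ^ α
          - (|t i.succ - s i.castSucc| ^ α + |s i.succ - t i.castSucc| ^ α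
            - |t i.succ - s i.succ| ^ α - |t i.castSucc - s i.castSucc| ^ α)
        ≤ 2 * (f i.succ + f i.castSucc) := by
      have h := key_ineq hα.1 hα.2 (htm (Fin.castSucc_le_succ i))
        (hsm (Fin.castSucc_le_succ i)) (p := α)
        (u := t i.castSucc) (v := t i.succ) (q := s i.castSucc) (r := s i.succ)
      simp only [hf]
      exact h
    have ha2 : (a i)^2 ≤ 1 := by
      have := ha i; have := ha1 i; nlinarith
    have hnn : 0 ≤ 2 * (f i.succ + f i.castSucc) := by
      have := Real.rpow_nonneg (abs_nonneg (t i.succ - s i.succ)) α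
      have := Real.rpow_nonneg (abs_nonneg (t i.castSucc - s i.castSucc)) α
      simp only [hf]; linarith
    calc (a i)^2 * _ ≤ (a i)^2 * (2 * (f i.succ + f i.castSucc)) := by
          exact mul_le_mul_of_nonneg_left hkey (sq_nonneg _)
      _ ≤ 1 * (2 * (f i.succ + f i.castSucc)) := mul_le_mul_of_nonneg_right ha2 hnn
      _ = 2 * (f i.succ + f i.castSucc) := one_mul _
  have hsum : V s t ≤ ∑ i : Fin (n+1), 2 * (f i.succ + f i.castSucc) :=
    Finset.sum_le_sum fun i _ => hterm i
  have hsplit : ∑ i : Fin (n+1), 2 * (f i.succ + f i.castSucc)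
      = 2 * ((∑ i : Fin (n+1), f i.succ) + ∑ i : Fin (n+1), f i.castSucc) := by
    rw [← Finset.sum_add_distrib, ← Finset.mul_sum]
  have htot1 : ∑ i : Fin (n+1), f i.succ
      = (∑ i : Fin n, f i.succ.castSucc) + f (Fin.last (n+1)) := by
    rw [Fin.sum_univ_castSucc (f := fun i : Fin (n+1) => f i.succ)]
    simp only [Fin.succ_castSucc, Fin.succ_last]
  have htot2 : ∑ i : Fin (n+1), f i.castSucc
      = f 0 + ∑ i : Fin n, f i.succ.castSucc := by
    rw [Fin.sum_univ_succ (f := fun i : Fin (n+1) => f i.castSucc)]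
    simp [Fin.castSucc_zero]
  calc V s t ≤ ∑ i : Fin (n+1), 2 * (f i.succ + f i.castSucc) := hsum
    _ = 2 * ((∑ i : Fin n, f i.succ.castSucc) + f (Fin.last (n+1))
          + (f 0 + ∑ i : Fin n, f i.succ.castSucc)) := by rw [hsplit, htot1, htot2]
    _ = 4 * ∑ i : Fin n, f i.succ.castSucc := by rw [hf0, hflast]; ring
    _ = 4 * ∑ i : Fin n, |t i.succ.castSucc - s i.succ.castSucc| ^ α := rfl
end
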